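/- arXiv:1110.4126 — 9 statements merged into one kernel-verified Lean document; each statement's English description precedes it below -/
import Mathlib

section
/- Let N_r ≥ 2 be an integer and let R be any bijection from {1,2}×{1,…,N_r} to {1,…,2N_r}. Define V(R) = max over pairs of indices j₁ ≠ j₂ in {1,…,N_r} of min(R(1,j₁), R(2,j₂)). Then N_r ≤ V(R) ≤ 2N_r − 1; that is, the optimal max-min assignment value is always between the (N_r+1)-th largest and the 2nd largest entry of the matrix. -/
/-- The optimal max-min assignment value for a rank assignment
`R : Fin 2 × Fin Nr ≃ Fin (2·Nr)` (larger rank means larger entry; the rank of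
cell `c` is `(R c).val + 1 ∈ {1, …, 2·Nr}`):
`V(R) = max_{j₁ ≠ j₂} min (rank (1, j₁)) (rank (2, j₂))`. -/
def ORSvalue (Nr : ℕ) (R : (Fin 2 × Fin Nr) ≃ Fin (2 * Nr)) : ℕ :=
  Finset.sup (Finset.univ.filter fun p : Fin Nr × Fin Nr => p.1 ≠ p.2)
    (fun p => min ((R (0, p.1)).val + 1) ((R (1, p.2)).val + 1))

/-- For every bijection `R` from `{1,2} × {1,…,Nr}` to `{1,…,2·Nr}` (with `Nr ≥ 2`),
the optimal max-min assignment value satisfies `Nr ≤ V(R) ≤ 2·Nr − 1`: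
it lies between the `(Nr+1)`-th largest and the 2nd largest entry. -/
theorem ORSvalue_bounds (Nr : ℕ) (hNr : 2 ≤ Nr) (R : (Fin 2 × Fin Nr) ≃ Fin (2 * Nr)) :
    Nr ≤ ORSvalue Nr R ∧ ORSvalue Nr R ≤ 2 * Nr - 1 := by
  have hpos : 0 < 2 * Nr := by omega
  set S : Finset (Fin 2 × Fin Nr) :=
    Finset.univ.filter (fun c => Nr - 1 ≤ (R c).val) with hS
  have hScard : S.card = Nr + 1 := by
    have h2 : S.card = (Finset.Ici (⟨Nr - 1, by omega⟩ : Fin (2*Nr))).card := by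
      apply Finset.card_bij (fun c _ => R c)
      · intro c hc
        simp only [hS, Finset.mem_filter, Finset.mem_univ, true_and] at hc
        simpa [Finset.mem_Ici, Fin.le_def] using hc
      · intro a _ b _ hab; exact R.injective hab
      · intro v hv; exact ⟨R.symm v, by
          simp only [Finset.mem_Ici, Fin.le_def] at hv
          simp only [hS, Finset.mem_filter, Finset.mem_univ, true_and, Equiv.apply_symm_apply]
          omega, by simp⟩
    rw [h2, Fin.card_Ici]
    simp only
    omega
  set r0 : Finset (Fin Nr) := Finset.univ.filter (fun j => Nr - 1 ≤ (R (0, j)).val) with hr0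
  set r1 : Finset (Fin Nr) := Finset.univ.filter (fun j => Nr - 1 ≤ (R (1, j)).val) with hr1
  have hsplit : r0.card + r1.card = Nr + 1 := by
    rw [← hScard]
    rw [← Finset.card_filter_add_card_filter_not (s := S) (p := fun c => c.1 = 0)]
    congr 1
    · apply Finset.card_bij (fun j _ => ((0 : Fin 2), j))
      · intro j hj
        simp only [hr0, Finset.mem_filter, Finset.mem_univ, true_and] at hj
        simp [hS, hj]
        omega
      · intro a _ b _ hab
        simpa [Prod.ext_iff] using hab
      · intro c hc
        simp only [Finset.mem_filter, hS, Finset.mem_univ, true_and] at hc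
        refine ⟨c.2, ?_, ?_⟩
        · simp [hr0, ← hc.2]
          omega
        · ext
          · rw [hc.2]
          · rfl
    · apply Finset.card_bij (fun j _ => ((1 : Fin 2), j))
      · intro j hj
        simp only [hr1, Finset.mem_filter, Finset.mem_univ, true_and] at hj
        simp [hS, hj]
        omega
      · intro a _ b _ hab
        simpa [Prod.ext_iff] using hab
      · intro c hc
        simp only [Finset.mem_filter, hS, Finset.mem_univ, true_and] at hc
        have hc1 : c.1 = 1 := by omega
        refine ⟨c.2, ?_, ?_⟩
        · simp [hr1, ← hc1]
          omega
        · ext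
          · rw [hc1]
          · rfl
  have h0le : r0.card ≤ Nr := le_trans (Finset.card_le_univ _) (by simp)
  have h1le : r1.card ≤ Nr := le_trans (Finset.card_le_univ _) (by simp)
  have h0 : r0.Nonempty := Finset.card_pos.mp (by omega)
  have h1 : r1.Nonempty := Finset.card_pos.mp (by omega)
  have key : ∃ a b : Fin Nr, a ≠ b ∧ a ∈ r0 ∧ b ∈ r1 := by
    by_contra h
    push_neg at h
    obtain ⟨a, ha⟩ := h0
    obtain ⟨b, hb⟩ := h1
    have hab : a = b := by
      by_contra hne; exact (h a b hne ha) hb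
    have hr0sub : r0 ⊆ {a} := by
      intro x hx
      simp only [Finset.mem_singleton]
      by_contra hne
      exact (h x b (hab ▸ hne) hx) hb
    have hr1sub : r1 ⊆ {a} := by
      intro x hx
      simp only [Finset.mem_singleton]
      by_contra hne
      exact (h a x (fun e => hne e.symm) ha) hx
    have c0 := Finset.card_le_card hr0sub
    have c1 := Finset.card_le_card hr1sub
    simp only [Finset.card_singleton] at c0 c1
    omega
  obtain ⟨a, b, hab, ha, hb⟩ := key
  simp only [hr0, Finset.mem_filter, Finset.mem_univ, true_and] at ha
  simp only [hr1, Finset.mem_filter, Finset.mem_univ, true_and] at hb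
  unfold ORSvalue
  constructor
  · have hmem : (a, b) ∈ Finset.univ.filter fun p : Fin Nr × Fin Nr => p.1 ≠ p.2 := by
      simp [hab]
    calc Nr ≤ min ((R (0, a)).val + 1) ((R (1, b)).val + 1) := by omega
    _ ≤ _ := Finset.le_sup (f := fun p : Fin Nr × Fin Nr =>
        min ((R (0, p.1)).val + 1) ((R (1, p.2)).val + 1)) hmem
  · apply Finset.sup_le
    intro p _
    have hne : R (0, p.1) ≠ R (1, p.2) := fun e => by
      have := R.injective e
      simp [Prod.ext_iff] at this
    have h1 : (R (0, p.1)).val < 2 * Nr := (R (0, p.1)).isLt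
    have h2 : (R (1, p.2)).val < 2 * Nr := (R (1, p.2)).isLt
    have hvne : (R (0, p.1)).val ≠ (R (1, p.2)).val := fun e => hne (Fin.ext e)
    omega
end

section
/- Let N_r ≥ 2 be an integer. Among all (2N_r)! bijections R from {1,2}×{1,…,N_r} to {1,…,2N_r}, the fraction of bijections for which V(R) = 2N_r − 2 (i.e., the ORS minimum SNR equals the third largest entry γ₃) equals (N_r + 2)/(2(2N_r − 1)). Equivalently, the fraction of bijections for which either (a) the two largest ranks lie in the same column, or (b) the two largest ranks lie in the same row and the third largest rank lies in the other row, equals (N_r + 2)/(2(2N_r − 1)). -/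
/-!
`V(R) ≥ k` iff the cells of rank `≥ k` contain two cells in different rows and different
columns. So `V(R) = 2N_r − 2` depends only on the cells `c₁, c₂, c₃` holding the three largest
ranks: `c₁, c₂` must not form such a pair while `c₁, c₂, c₃` must contain one, which (there
being only two rows) means that `c₁, c₂` share a column, or share a row with `c₃` in the other
row. Each injective triple of cells is the position of the top three ranks for exactly
`(2N_r − 3)!` bijections, and `2N_r(N_r − 1)(N_r + 2)` of the `2N_r(2N_r − 1)(2N_r − 2)`
injective triples are of this kind.
-/

open Finset Function
open scoped Nat

section EquivFibres

variable {α β κ : Type*} [Fintype α] [Fintype β] [Fintype κ] [DecidableEq α] [DecidableEq β]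

theorem card_compl_range_embedding (f : κ ↪ α) :
    Fintype.card ↥(Set.range f)ᶜ = Fintype.card α - Fintype.card κ := by
  rw [Fintype.card_compl_set, Set.card_range_of_injective f.injective]

theorem card_equiv_apply_embedding_eq (hαβ : Fintype.card α = Fintype.card β)
    (f : κ ↪ α) (g : κ ↪ β) :
    Fintype.card {e : α ≃ β // ∀ i, e (f i) = g i} = (Fintype.card α - Fintype.card κ)! := by
  let e₀ : Set.range f ≃ Set.range g :=
    (Equiv.ofInjective f f.injective).symm.trans (Equiv.ofInjective g g.injective)
  have he₀ (e : α ≃ β) : (∀ i, e (f i) = g i) ↔ ∀ x : Set.range f, e x = e₀ x := by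
    refine ⟨?_, fun h i => ?_⟩
    · rintro h ⟨_, i, rfl⟩
      simp [e₀, h]
    · simpa [e₀] using h ⟨f i, i, rfl⟩
  rw [Fintype.card_congr ((Equiv.subtypeEquivRight he₀).trans (Equiv.Set.compl e₀)),
    Fintype.card_equiv (Fintype.equivOfCardEq (by
      rw [card_compl_range_embedding, card_compl_range_embedding, hαβ])),
    card_compl_range_embedding]

theorem card_filter_symm_trans (hαβ : Fintype.card α = Fintype.card β) (g : κ ↪ β)
    (P : (κ ↪ α) → Prop) [DecidablePred P] :
    #{e : α ≃ β | P (g.trans e.symm.toEmbedding)} =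
      #{f : κ ↪ α | P f} * (Fintype.card α - Fintype.card κ)! := by
  rw [card_eq_sum_card_fiberwise (f := fun e : α ≃ β => g.trans e.symm.toEmbedding)
    (t := {f : κ ↪ α | P f}) (fun e he => by simpa using he), ← smul_eq_mul, ← sum_const]
  refine sum_congr rfl fun f hf => ?_
  rw [← card_equiv_apply_embedding_eq hαβ f g, Fintype.card_subtype]
  congr 1
  ext e
  have hfib : g.trans e.symm.toEmbedding = f ↔ ∀ i, e (f i) = g i := by
    simp only [DFunLike.ext_iff, Embedding.trans_apply, Equiv.coe_toEmbedding,
      Equiv.symm_apply_eq]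
    exact forall_congr' fun _ => eq_comm
  simp only [mem_filter, mem_univ, true_and] at hf ⊢
  rw [hfib]
  exact ⟨And.right, fun h => ⟨hfib.mpr h ▸ hf, h⟩⟩

end EquivFibres

def distinctTriples (γ : Type*) [Fintype γ] [DecidableEq γ] : Finset (γ × γ × γ) :=
  {t | t.1 ≠ t.2.1 ∧ t.1 ≠ t.2.2 ∧ t.2.1 ≠ t.2.2}

theorem card_filter_embedding_fin_three {γ : Type*} [Fintype γ] [DecidableEq γ]
    (P : γ → γ → γ → Prop) [∀ a b c, Decidable (P a b c)] :
    #{f : Fin 3 ↪ γ | P (f 0) (f 1) (f 2)} = #{t ∈ distinctTriples γ | P t.1 t.2.1 t.2.2} := by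
  refine card_bij' (fun f _ => (f 0, f 1, f 2))
    (fun t ht => ⟨![t.1, t.2.1, t.2.2], fun i j hij => ?_⟩) ?_ ?_ ?_ ?_
  · simp only [distinctTriples, mem_filter, mem_univ, true_and] at ht
    fin_cases i <;> fin_cases j <;> simp_all [eq_comm]
  · intro f hf
    simp_all [distinctTriples]
  · intro t ht
    simp only [mem_filter, mem_univ, true_and] at ht ⊢
    exact ht.2
  · intro f _
    ext i
    fin_cases i <;> rfl
  · intro t _
    rfl

/-- The cells `c₁, c₂, c₃` of the largest, second and third largest entries force the max-min
value of the selection to be the third largest entry. -/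
def MaxMinIsThird {ι : Type*} (c₁ c₂ c₃ : Fin 2 × ι) : Prop :=
  c₁.2 = c₂.2 ∨ (c₁.1 = c₂.1 ∧ c₃.1 ≠ c₁.1)

instance {ι : Type*} [DecidableEq ι] (c₁ c₂ c₃ : Fin 2 × ι) :
    Decidable (MaxMinIsThird c₁ c₂ c₃) :=
  inferInstanceAs (Decidable (_ ∨ _))

section Counting

variable {ι : Type*} [Fintype ι] [DecidableEq ι]

theorem card_distinctTriples_same_column :
    #{t ∈ distinctTriples (Fin 2 × ι) | t.1.2 = t.2.1.2} =
      2 * Fintype.card ι * (2 * Fintype.card ι - 2) := by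
  have fiber (c : Fin 2 × ι) :
      #{t ∈ {t ∈ distinctTriples (Fin 2 × ι) | t.1.2 = t.2.1.2} | t.1 = c} =
        2 * Fintype.card ι - 2 := by
    set c' : Fin 2 × ι := (c.1 + 1, c.2)
    have hc : c ≠ c' := by simp [c', Prod.ext_iff]
    have : {t ∈ {t ∈ distinctTriples (Fin 2 × ι) | t.1.2 = t.2.1.2} | t.1 = c} =
        ({c, c'}ᶜ : Finset _).image fun x => (c, c', x) := by
      ext ⟨a, b, x⟩
      simp only [distinctTriples, mem_filter, mem_univ, true_and, mem_image, mem_compl,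
        mem_insert, mem_singleton, not_or, Prod.mk.injEq]
      constructor
      · rintro ⟨⟨⟨hab, hax, hbx⟩, hcol⟩, rfl⟩
        have hrow : a.1 ≠ b.1 := fun h => hab (Prod.ext h hcol)
        obtain rfl : c' = b := Prod.ext (by simp only [c']; omega) hcol
        exact ⟨x, ⟨hax.symm, hbx.symm⟩, rfl, rfl, rfl⟩
      · rintro ⟨y, ⟨hyc, hyc'⟩, rfl, rfl, rfl⟩
        exact ⟨⟨⟨hc, Ne.symm hyc, Ne.symm hyc'⟩, rfl⟩, rfl⟩
    rw [this, card_image_of_injective _ (fun x y h => by simpa using h), card_compl,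
      card_pair hc]
    simp
  rw [card_eq_sum_card_fiberwise (f := Prod.fst) (t := univ) (by simp)]
  simp [fiber]

theorem card_distinctTriples_same_row_third_other :
    #{t ∈ distinctTriples (Fin 2 × ι) | t.1.1 = t.2.1.1 ∧ t.2.2.1 ≠ t.1.1} =
      2 * Fintype.card ι * (Fintype.card ι - 1) * Fintype.card ι := by
  have : {t ∈ distinctTriples (Fin 2 × ι) | t.1.1 = t.2.1.1 ∧ t.2.2.1 ≠ t.1.1} =
      (univ ×ˢ univ.offDiag ×ˢ univ).image
        fun q : Fin 2 × (ι × ι) × ι => ((q.1, q.2.1.1), (q.1, q.2.1.2), (q.1 + 1, q.2.2)) := by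
    ext ⟨⟨r₁, j₁⟩, ⟨r₂, j₂⟩, ⟨r₃, j₃⟩⟩
    simp only [distinctTriples, mem_filter, mem_univ, true_and, mem_image, mem_product,
      mem_offDiag, ne_eq, Prod.mk.injEq, Prod.exists, and_true]
    constructor
    · rintro ⟨⟨h₁₂, -, -⟩, rfl, hr₃⟩
      exact ⟨r₁, j₁, j₂, j₃, fun h => h₁₂ ⟨rfl, h⟩, ⟨rfl, rfl⟩, ⟨rfl, rfl⟩, by omega, rfl⟩
    · rintro ⟨r, i₁, i₂, i₃, hi, ⟨rfl, rfl⟩, ⟨rfl, rfl⟩, rfl, rfl⟩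
      refine ⟨⟨fun h => hi h.2, ?_, ?_⟩, rfl, ?_⟩ <;> omega
  rw [this, card_image_of_injective _ (fun q q' h => by simp only [Prod.ext_iff] at h ⊢; tauto)]
  simp [card_product, offDiag_card, Nat.mul_sub_one, mul_assoc]

theorem card_embeddings_maxMinIsThird :
    #{f : Fin 3 ↪ Fin 2 × ι | MaxMinIsThird (f 0) (f 1) (f 2)} =
      2 * Fintype.card ι * (Fintype.card ι - 1) * (Fintype.card ι + 2) := by
  rw [card_filter_embedding_fin_three]
  have split : {t ∈ distinctTriples (Fin 2 × ι) | MaxMinIsThird t.1 t.2.1 t.2.2} =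
      {t ∈ distinctTriples (Fin 2 × ι) | t.1.2 = t.2.1.2} ∪
        {t ∈ distinctTriples (Fin 2 × ι) | t.1.1 = t.2.1.1 ∧ t.2.2.1 ≠ t.1.1} := by
    ext t
    rw [mem_union, mem_filter, mem_filter, mem_filter, MaxMinIsThird, and_or_left]
  rw [split, card_union_of_disjoint (disjoint_filter.2 fun t ht hcol hrow =>
      (mem_filter.1 ht).2.1 (Prod.ext hrow.1 hcol)),
    card_distinctTriples_same_column, card_distinctTriples_same_row_third_other,
    show 2 * Fintype.card ι - 2 = 2 * (Fintype.card ι - 1) by omega]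
  ring

end Counting

theorem le_ORSvalue_iff {Nr k : ℕ} (R : (Fin 2 × Fin Nr) ≃ Fin (2 * Nr)) (hk : 0 < k) :
    k ≤ ORSvalue Nr R ↔
      ∃ a b : Fin 2 × Fin Nr, k ≤ (R a).val + 1 ∧ k ≤ (R b).val + 1 ∧ a.1 ≠ b.1 ∧ a.2 ≠ b.2 := by
  rw [ORSvalue, Finset.le_sup_iff hk]
  constructor
  · rintro ⟨⟨j₁, j₂⟩, hj, hk⟩
    exact ⟨(0, j₁), (1, j₂), (le_min_iff.mp hk).1, (le_min_iff.mp hk).2, zero_ne_one,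
      by simpa using hj⟩
  · rintro ⟨a, b, ha, hb, hrow, hcol⟩
    rcases (by omega : a.1 = 0 ∧ b.1 = 1 ∨ a.1 = 1 ∧ b.1 = 0) with ⟨ha0, hb1⟩ | ⟨ha1, hb0⟩
    · refine ⟨(a.2, b.2), by simpa using hcol, ?_⟩
      simp only [← ha0, ← hb1, Prod.mk.eta]
      omega
    · refine ⟨(b.2, a.2), by simpa using hcol.symm, ?_⟩
      simp only [← ha1, ← hb0, Prod.mk.eta]
      omega

theorem maxMinIsThird_iff {ι : Type*} {c₁ c₂ c₃ : Fin 2 × ι} (h₁₂ : c₁ ≠ c₂) (h₁₃ : c₁ ≠ c₃)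
    (h₂₃ : c₂ ≠ c₃) :
    MaxMinIsThird c₁ c₂ c₃ ↔
      (∃ a b : Fin 2 × ι, (a = c₁ ∨ a = c₂ ∨ a = c₃) ∧ (b = c₁ ∨ b = c₂ ∨ b = c₃) ∧
        a.1 ≠ b.1 ∧ a.2 ≠ b.2) ∧
      ¬∃ a b : Fin 2 × ι, (a = c₁ ∨ a = c₂) ∧ (b = c₁ ∨ b = c₂) ∧ a.1 ≠ b.1 ∧ a.2 ≠ b.2 := by
  have hrow : c₃.1 = c₁.1 ∨ c₃.1 = c₂.1 ∨ c₁.1 = c₂.1 := by omega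
  simp only [or_and_right, exists_or]
  rw [ne_eq, Prod.ext_iff] at h₁₂ h₁₃ h₂₃
  grind [MaxMinIsThird]

theorem ORSvalue_eq_iff {Nr : ℕ} (hNr : 2 ≤ Nr) (R : (Fin 2 × Fin Nr) ≃ Fin (2 * Nr))
    {v₁ v₂ v₃ : Fin (2 * Nr)} (hv₁ : v₁.val = 2 * Nr - 1) (hv₂ : v₂.val = 2 * Nr - 2)
    (hv₃ : v₃.val = 2 * Nr - 3) :
    ORSvalue Nr R = 2 * Nr - 2 ↔ MaxMinIsThird (R.symm v₁) (R.symm v₂) (R.symm v₃) := by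
  set c₁ := R.symm v₁ with hc₁
  set c₂ := R.symm v₂ with hc₂
  set c₃ := R.symm v₃ with hc₃
  have top_two (c) : 2 * Nr - 1 ≤ (R c).val + 1 ↔ c = c₁ ∨ c = c₂ := by
    simp only [hc₁, hc₂, Equiv.eq_symm_apply, Fin.ext_iff, hv₁, hv₂]
    omega
  have top_three (c) : 2 * Nr - 2 ≤ (R c).val + 1 ↔ c = c₁ ∨ c = c₂ ∨ c = c₃ := by
    simp only [hc₁, hc₂, hc₃, Equiv.eq_symm_apply, Fin.ext_iff, hv₁, hv₂, hv₃]
    omega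
  have h₁₂ : c₁ ≠ c₂ := R.symm.injective.ne (by rw [ne_eq, Fin.ext_iff, hv₁, hv₂]; omega)
  have h₁₃ : c₁ ≠ c₃ := R.symm.injective.ne (by rw [ne_eq, Fin.ext_iff, hv₁, hv₃]; omega)
  have h₂₃ : c₂ ≠ c₃ := R.symm.injective.ne (by rw [ne_eq, Fin.ext_iff, hv₂, hv₃]; omega)
  have hV : ORSvalue Nr R = 2 * Nr - 2 ↔
      2 * Nr - 2 ≤ ORSvalue Nr R ∧ ¬2 * Nr - 1 ≤ ORSvalue Nr R := by omega
  rw [maxMinIsThird_iff h₁₂ h₁₃ h₂₃, hV, le_ORSvalue_iff R (by omega),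
    le_ORSvalue_iff R (by omega)]
  simp only [top_two, top_three]

theorem cast_count_div_factorial_eq {n : ℕ} (hn : 2 ≤ n) :
    ((2 * n * (n - 1) * (n + 2) * (2 * n - 3)! : ℕ) : ℝ) / (2 * n)! =
      (n + 2) / (2 * (2 * n - 1)) := by
  obtain ⟨m, rfl⟩ : ∃ m, n = m + 2 := ⟨n - 2, by omega⟩
  have hfact : (2 * (m + 2))! = (2 * m + 4) * (2 * m + 3) * (2 * m + 2) * (2 * m + 1)! := by
    rw [show 2 * (m + 2) = 2 * m + 1 + 1 + 1 + 1 by ring]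
    simp only [Nat.factorial_succ]
    ring
  rw [hfact, show 2 * (m + 2) - 3 = 2 * m + 1 by omega, show m + 2 - 1 = m + 1 by omega]
  have hm : (0 : ℝ) ≤ m := m.cast_nonneg
  push_cast
  rw [div_eq_div_iff (by positivity) (by linarith)]
  ring

/-- For `Nr ≥ 2`, among all `(2·Nr)!` bijections `R` from `{1,2} × {1,…,Nr}` to
`{1,…,2·Nr}`, the fraction with `V(R) = 2·Nr − 2` (ORS minimum SNR equals the
third largest entry) equals `(Nr + 2)/(2(2·Nr − 1))`; equivalently, the fraction
of bijections for which either (a) the two largest ranks lie in the same column,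
or (b) the two largest ranks lie in the same row and the third largest rank lies
in the other row, equals `(Nr + 2)/(2(2·Nr − 1))`. -/
theorem ORS_min_eq_third_largest_fraction (Nr : ℕ) (hNr : 2 ≤ Nr) :
    (Nat.card {R : (Fin 2 × Fin Nr) ≃ Fin (2 * Nr) // ORSvalue Nr R = 2 * Nr - 2} : ℝ)
        / (Nat.factorial (2 * Nr) : ℝ)
      = ((Nr : ℝ) + 2) / (2 * (2 * (Nr : ℝ) - 1))
    ∧ (Nat.card {R : (Fin 2 × Fin Nr) ≃ Fin (2 * Nr) //
          (R.symm ⟨2 * Nr - 1, by omega⟩).2 = (R.symm ⟨2 * Nr - 2, by omega⟩).2 ∨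
          ((R.symm ⟨2 * Nr - 1, by omega⟩).1 = (R.symm ⟨2 * Nr - 2, by omega⟩).1 ∧
            (R.symm ⟨2 * Nr - 3, by omega⟩).1 ≠ (R.symm ⟨2 * Nr - 1, by omega⟩).1)} : ℝ)
        / (Nat.factorial (2 * Nr) : ℝ)
      = ((Nr : ℝ) + 2) / (2 * (2 * (Nr : ℝ) - 1)) := by
  let top : Fin 3 ↪ Fin (2 * Nr) :=
    ⟨![⟨2 * Nr - 1, by omega⟩, ⟨2 * Nr - 2, by omega⟩, ⟨2 * Nr - 3, by omega⟩], by
      intro i j h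
      fin_cases i <;> fin_cases j <;> simp_all [Fin.ext_iff] <;> omega⟩
  have hcount : #{R : (Fin 2 × Fin Nr) ≃ Fin (2 * Nr) |
      MaxMinIsThird (R.symm (top 0)) (R.symm (top 1)) (R.symm (top 2))} =
        2 * Nr * (Nr - 1) * (Nr + 2) * (2 * Nr - 3)! := by
    refine (card_filter_symm_trans (by simp) top
      fun f => MaxMinIsThird (f 0) (f 1) (f 2)).trans ?_
    rw [card_embeddings_maxMinIsThird]
    simp
  have hfraction : (Nat.card {R : (Fin 2 × Fin Nr) ≃ Fin (2 * Nr) //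
      MaxMinIsThird (R.symm (top 0)) (R.symm (top 1)) (R.symm (top 2))} : ℝ) / (2 * Nr)! =
      ((Nr : ℝ) + 2) / (2 * (2 * (Nr : ℝ) - 1)) := by
    rw [Nat.card_eq_fintype_card, Fintype.card_subtype, hcount]
    exact cast_count_div_factorial_eq hNr
  refine ⟨?_, hfraction⟩
  rw [Nat.card_congr (Equiv.subtypeEquivRight fun R =>
    ORSvalue_eq_iff hNr R (v₁ := top 0) (v₂ := top 1) (v₃ := top 2) rfl rfl rfl)]
  exact hfraction
end

section
/- Let N_r ≥ 3 be an integer and let k be an integer with 4 ≤ k ≤ N_r + 1. Among all (2N_r)! bijections R from {1,2}×{1,…,N_r} to {1,…,2N_r}, the fraction of bijections for which V(R) = 2N_r − k + 1 (i.e., the ORS minimum SNR equals the k-th largest entry γ_k) equals 2·N_r·C(N_r, k−1) / ((2N_r − (k−1))·C(2N_r, k−1)). Equivalently, the fraction of bijections in which the k−1 largest ranks all lie in the same row and the k-th largest rank lies in the other row equals this quantity. -/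
/-!
`V(R) ≥ t` iff two cells of rank `≥ t` lie in different rows and different columns. Three cells
of a two-row grid containing no such pair lie in one row; as `k - 1 ≥ 3`, `V(R)` is therefore the
rank of the `k`-th largest cell exactly when the `k - 1` cells ranked above it all lie in the row
not containing it. These `R` are counted by placing the `k`-th largest cell (`2 Nr` ways), the
`k - 1` cells above it injectively in the other row (`Nr.descFactorial (k - 1)` ways) and the
remaining `2 Nr - k` ranks arbitrarily.
-/

open Finset

section Counting

variable {α β γ : Type*} [Fintype α] [Fintype β] [Fintype γ]

theorem card_equiv_extend_eq (h : Nat.card α = Nat.card β) (ι : γ ↪ α) (φ : γ ↪ β) :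
    Nat.card {g : α ≃ β // ι.trans g.toEmbedding = φ} = (Nat.card α - Nat.card γ).factorial := by
  classical
  let e : Set.range ι ≃ Set.range φ :=
    (Equiv.ofInjective ι ι.injective).symm.trans (Equiv.ofInjective φ φ.injective)
  have hcompl : {g : α ≃ β // ι.trans g.toEmbedding = φ} ≃
      (((Set.range ι)ᶜ : Set α) ≃ ((Set.range φ)ᶜ : Set β)) :=
    (Equiv.subtypeEquivRight fun g => by
      simp only [DFunLike.ext_iff, Function.Embedding.trans_apply, Equiv.coe_toEmbedding]
      refine ⟨fun H ⟨a, x, hx⟩ => ?_, fun H x => by simpa [e] using H ⟨ι x, x, rfl⟩⟩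
      subst hx
      simp [e, H]).trans (Equiv.Set.compl e)
  simp only [Nat.card_eq_fintype_card] at h ⊢
  have hcard : Fintype.card ((Set.range ι)ᶜ : Set α) = Fintype.card ((Set.range φ)ᶜ : Set β) := by
    rw [Fintype.card_compl_set, Fintype.card_compl_set, Fintype.card_congr e, h]
  rw [Fintype.card_congr hcompl, Fintype.card_equiv (Fintype.equivOfCardEq hcard),
    Fintype.card_compl_set, Set.card_range_of_injective ι.injective]

theorem card_equiv_restrict_pred (h : Nat.card α = Nat.card β) (ι : γ ↪ α)
    (P : (γ ↪ β) → Prop) :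
    Nat.card {g : α ≃ β // P (ι.trans g.toEmbedding)} =
      Nat.card {φ : γ ↪ β // P φ} * (Nat.card α - Nat.card γ).factorial := by
  classical
  rw [← Nat.card_congr (Equiv.sigmaSubtypeFiberEquivSubtype
    (fun g : α ≃ β => ι.trans g.toEmbedding) fun _ => Iff.rfl), Nat.card_sigma]
  simp only [card_equiv_extend_eq h, Finset.sum_const, Finset.card_univ, smul_eq_mul,
    ← Nat.card_eq_fintype_card]

theorem card_option_embedding_forall_rel {σ : Type*} [Fintype σ] (r : β → β → Prop)
    (hr : ∀ b, ¬ r b b) {N : ℕ} (hN : ∀ b, Nat.card {c // r b c} = N) :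
    Nat.card {φ : Option σ ↪ β // ∀ x, r (φ none) (φ (some x))} =
      Nat.card β * N.descFactorial (Nat.card σ) := by
  classical
  have e : {φ : Option σ ↪ β // ∀ x, r (φ none) (φ (some x))} ≃
      Σ b : β, (σ ↪ {c // r b c}) :=
    { toFun := fun φ => ⟨φ.1 none, Function.Embedding.some.trans φ.1 |>.codRestrict _ φ.2⟩
      invFun := fun p => ⟨(p.2.trans (Function.Embedding.subtype _)).optionElim p.1
          fun ⟨x, hx⟩ => hr p.1 <| by simpa [← hx] using (p.2 x).2,
        fun x => (p.2 x).2⟩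
      left_inv := fun φ => Subtype.ext <| Function.Embedding.ext <| by rintro (_ | _) <;> rfl
      right_inv := fun p => rfl }
  rw [Nat.card_congr e, Nat.card_sigma]
  simp only [Nat.card_eq_fintype_card, Fintype.card_embedding_eq] at hN ⊢
  simp [hN]

end Counting

theorem fin_two_eq_of_ne_of_ne {x y z : Fin 2} (hx : x ≠ z) (hy : y ≠ z) : x = y := by
  omega

theorem fin_two_exists_forall_eq_and_ne_iff {ι : Type*} {p : ι → Prop} {f : ι → Fin 2}
    {j : Fin 2} : (∃ i, (∀ x, p x → f x = i) ∧ j ≠ i) ↔ ∀ x, p x → f x ≠ j := by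
  have hrev : j.rev ≠ j := by fin_cases j <;> decide
  exact ⟨fun ⟨i, hi, hj⟩ x hx => hi x hx ▸ hj.symm,
    fun h => ⟨j.rev, fun x hx => fin_two_eq_of_ne_of_ne (h x hx) hrev, hrev.symm⟩⟩

theorem exists_forall_fst_eq_of_two_lt_card {κ : Type*} [DecidableEq κ]
    {S : Finset (Fin 2 × κ)} (hS : 2 < #S) (h : ∀ d ∈ S, ∀ e ∈ S, d.1 ≠ e.1 → d.2 = e.2) :
    ∃ i, ∀ c ∈ S, c.1 = i := by
  obtain ⟨a, ha⟩ : S.Nonempty := Finset.card_pos.mp (by omega)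
  refine ⟨a.1, fun c hc => by_contra fun hca => ?_⟩
  obtain ⟨d, hd, hdac⟩ := exists_mem_notMem_of_card_lt_card (s := {a, c})
    (card_le_two.trans_lt hS)
  simp only [mem_insert, mem_singleton, not_or] at hdac
  by_cases hda : d.1 = a.1
  · exact hdac.1 (Prod.ext hda ((h d hd c hc (hda ▸ Ne.symm hca)).trans (h c hc a ha hca)))
  · exact hdac.2 (Prod.ext (fin_two_eq_of_ne_of_ne hda hca)
      ((h d hd a ha hda).trans (h c hc a ha hca).symm))

theorem Equiv.card_filter_lt_apply {α : Type*} [Fintype α] {n : ℕ} (R : α ≃ Fin n)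
    (m : Fin n) : #(univ.filter fun c => m < R c) = n - 1 - m := by
  rw [← Fin.card_Ioi, ← card_map R.symm.toEmbedding]
  congr 1
  ext c
  simp

theorem card_fst_ne {κ : Type*} [Fintype κ] (i : Fin 2) :
    Nat.card {c : Fin 2 × κ // c.1 ≠ i} = Nat.card κ := by
  rw [Nat.card_congr (Equiv.prodSubtypeFstEquivSubtypeProd (p := (· ≠ i))), Nat.card_prod]
  simp

section ORS

variable {Nr : ℕ}

def AboveInOtherRow (R : (Fin 2 × Fin Nr) ≃ Fin (2 * Nr)) (m : Fin (2 * Nr)) : Prop :=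
  ∀ c, m < R c → c.1 ≠ (R.symm m).1

theorem lt_ORSvalue_iff (R : (Fin 2 × Fin Nr) ≃ Fin (2 * Nr)) (t : ℕ) :
    t < ORSvalue Nr R ↔
      ∃ d e : Fin 2 × Fin Nr, d.1 ≠ e.1 ∧ d.2 ≠ e.2 ∧ t ≤ (R d).val ∧ t ≤ (R e).val := by
  simp only [ORSvalue, Finset.lt_sup_iff, mem_filter, mem_univ, true_and, lt_min_iff,
    Nat.lt_succ_iff]
  constructor
  · rintro ⟨⟨j₁, j₂⟩, hj, h₁, h₂⟩
    exact ⟨(0, j₁), (1, j₂), zero_ne_one, hj, h₁, h₂⟩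
  · rintro ⟨⟨i, j⟩, ⟨i', j'⟩, hi, hj, h, h'⟩
    fin_cases i <;> fin_cases i' <;> simp at hi
    · exact ⟨(j, j'), hj, h, h'⟩
    · exact ⟨(j', j), Ne.symm hj, h', h⟩

theorem ORSvalue_eq_succ_iff (R : (Fin 2 × Fin Nr) ≃ Fin (2 * Nr)) (m : Fin (2 * Nr))
    (hm : m.val + 4 ≤ 2 * Nr) :
    ORSvalue Nr R = m.val + 1 ↔ AboveInOtherRow R m := by
  classical
  set S := univ.filter fun c => m < R c with hSdef
  have hS : #S = 2 * Nr - 1 - m := R.card_filter_lt_apply m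
  have hmem : ∀ c, c ∈ S ↔ m < R c := by simp [hSdef]
  have hle : ∀ c, m.val ≤ (R c).val → m < R c ∨ c = R.symm m := by
    intro c hc
    rcases hc.lt_or_eq with h | h
    · exact Or.inl h
    · exact Or.inr (R.eq_symm_apply.mpr (Fin.ext h.symm))
  rw [show ORSvalue Nr R = m.val + 1 ↔ m.val < ORSvalue Nr R ∧ ¬ m.val + 1 < ORSvalue Nr R by
    omega, lt_ORSvalue_iff, lt_ORSvalue_iff]
  constructor
  · rintro ⟨⟨d, e, hde, -, hd, he⟩, hno⟩ c hc hcm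
    obtain ⟨i, hi⟩ := exists_forall_fst_eq_of_two_lt_card (S := S) (by omega)
      fun x hx y hy hxy =>
        by_contra fun hcol => hno ⟨x, y, hxy, hcol, (hmem x).1 hx, (hmem y).1 hy⟩
    have hrow : ∀ x, m.val ≤ (R x).val → x.1 = i := by
      intro x hx
      rcases hle x hx with hx | rfl
      · exact hi x ((hmem x).2 hx)
      · exact hcm ▸ hi c ((hmem c).2 hc)
    exact hde ((hrow d hd).trans (hrow e he).symm)
  · intro h
    have hrow : ∀ x y, m < R x → m < R y → x.1 = y.1 := fun x y hx hy =>
      fin_two_eq_of_ne_of_ne (h x hx) (h y hy)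
    refine ⟨?_, fun ⟨d, e, hde, _, hd, he⟩ => hde (hrow d e hd he)⟩
    obtain ⟨a, ha, b, hb, hab⟩ := one_lt_card.mp (by omega : 1 < #S)
    rw [hmem] at ha hb
    obtain ⟨d, hd, hcol⟩ : ∃ d, m < R d ∧ d.2 ≠ (R.symm m).2 := by
      by_cases hcol : a.2 = (R.symm m).2
      · exact ⟨b, hb, fun hb2 => hab (Prod.ext (hrow a b ha hb) (hcol.trans hb2.symm))⟩
      · exact ⟨a, ha, hcol⟩
    exact ⟨d, R.symm m, h d hd, hcol, hd.le, by simp⟩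

theorem card_aboveInOtherRow (m : Fin (2 * Nr)) :
    Nat.card {R : (Fin 2 × Fin Nr) ≃ Fin (2 * Nr) // AboveInOtherRow R m} =
      2 * Nr * Nr.descFactorial (2 * Nr - 1 - m) * (m : ℕ).factorial := by
  let ι : Option (Set.Ioi m) ↪ Fin (2 * Nr) :=
    (Function.Embedding.subtype _).optionElim m (by simp)
  have e : {R : (Fin 2 × Fin Nr) ≃ Fin (2 * Nr) // AboveInOtherRow R m} ≃
      {g : Fin (2 * Nr) ≃ Fin 2 × Fin Nr // ∀ x : Set.Ioi m,
        ((ι.trans g.toEmbedding) (some x)).1 ≠ ((ι.trans g.toEmbedding) none).1} :=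
    Equiv.subtypeEquiv (Equiv.symmEquiv _ _) fun R => by
      rw [AboveInOtherRow, R.symm.surjective.forall]
      simp [ι]
  rw [Nat.card_congr e]
  refine (card_equiv_restrict_pred (by simp) ι
    (fun φ : Option (Set.Ioi m) ↪ Fin 2 × Fin Nr => ∀ x, (φ (some x)).1 ≠ (φ none).1)).trans ?_
  rw [card_option_embedding_forall_rel (fun b c : Fin 2 × Fin Nr => c.1 ≠ b.1) (fun _ => (· rfl))
    (fun b => card_fst_ne b.1)]
  have hm : 2 * Nr - (2 * Nr - 1 - m + 1) = m := by omega
  simp [hm]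

end ORS

theorem two_mul_descFactorial_mul_factorial_div_factorial (Nr k : ℕ) (hk1 : 1 ≤ k)
    (hk : k ≤ 2 * Nr) :
    ((2 * Nr * Nr.descFactorial (k - 1) * (2 * Nr - k).factorial : ℕ) : ℝ) /
        ((2 * Nr).factorial : ℝ) =
      2 * (Nr : ℝ) * (Nr.choose (k - 1) : ℝ) /
        ((2 * (Nr : ℝ) - ((k : ℝ) - 1)) * ((2 * Nr).choose (k - 1) : ℝ)) := by
  have hdesc : (Nr.descFactorial (k - 1) : ℝ) = (k - 1).factorial * Nr.choose (k - 1) := by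
    exact_mod_cast Nat.descFactorial_eq_factorial_mul_choose Nr (k - 1)
  have hfact : ((2 * Nr).factorial : ℝ) =
      (2 * Nr).choose (k - 1) * (k - 1).factorial * ((2 * (Nr : ℝ) - ((k : ℝ) - 1)) *
        (2 * Nr - k).factorial) := by
    rw [← Nat.choose_mul_factorial_mul_factorial (by omega : k - 1 ≤ 2 * Nr),
      show 2 * Nr - (k - 1) = 2 * Nr - k + 1 by omega, Nat.factorial_succ]
    push_cast [Nat.cast_sub hk]
    ring
  have hsub : 2 * (Nr : ℝ) - ((k : ℝ) - 1) ≠ 0 := by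
    have : (k : ℝ) ≤ 2 * Nr := by exact_mod_cast hk
    linarith
  have hchoose : ((2 * Nr).choose (k - 1) : ℝ) ≠ 0 := by
    exact_mod_cast (Nat.choose_pos (by omega)).ne'
  rw [hfact]
  push_cast
  rw [hdesc]
  field_simp

/-- For `Nr ≥ 3` and `4 ≤ k ≤ Nr + 1`, among all `(2·Nr)!` bijections `R` from
`{1,2} × {1,…,Nr}` to `{1,…,2·Nr}`, the fraction with `V(R) = 2·Nr − k + 1` (ORS
minimum SNR equals the `k`-th largest entry) equals
`2·Nr·C(Nr, k−1) / ((2·Nr − (k−1))·C(2·Nr, k−1))`; equivalently, the fraction of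
bijections in which the `k − 1` largest ranks all lie in the same row and the
`k`-th largest rank lies in the other row equals this quantity. -/
theorem ORS_min_eq_kth_largest_fraction (Nr k : ℕ)
    (hk4 : 4 ≤ k) (hk : k ≤ Nr + 1) :
    (Nat.card {R : (Fin 2 × Fin Nr) ≃ Fin (2 * Nr) //
          ORSvalue Nr R = 2 * Nr - k + 1} : ℝ) / (Nat.factorial (2 * Nr) : ℝ)
      = (2 * (Nr : ℝ) * (Nr.choose (k - 1) : ℝ))
        / ((2 * (Nr : ℝ) - ((k : ℝ) - 1)) * (((2 * Nr).choose (k - 1) : ℝ)))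
    ∧ (Nat.card {R : (Fin 2 × Fin Nr) ≃ Fin (2 * Nr) //
          ∃ i : Fin 2,
            (∀ c : Fin 2 × Fin Nr, 2 * Nr - (k - 1) ≤ (R c).val → c.1 = i) ∧
            (R.symm ⟨2 * Nr - k, by omega⟩).1 ≠ i} : ℝ) / (Nat.factorial (2 * Nr) : ℝ)
      = (2 * (Nr : ℝ) * (Nr.choose (k - 1) : ℝ))
        / ((2 * (Nr : ℝ) - ((k : ℝ) - 1)) * (((2 * Nr).choose (k - 1) : ℝ))) := by
  set m : Fin (2 * Nr) := ⟨2 * Nr - k, by omega⟩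
  have hvalue : ∀ R, ORSvalue Nr R = 2 * Nr - k + 1 ↔ AboveInOtherRow R m :=
    fun R => ORSvalue_eq_succ_iff R m (by simp only [m]; omega)
  have hrows : ∀ R : (Fin 2 × Fin Nr) ≃ Fin (2 * Nr),
      (∃ i : Fin 2, (∀ c, 2 * Nr - (k - 1) ≤ (R c).val → c.1 = i) ∧ (R.symm m).1 ≠ i) ↔
        AboveInOtherRow R m := fun R => by
    rw [fin_two_exists_forall_eq_and_ne_iff, AboveInOtherRow]
    exact forall_congr' fun c => imp_congr_left (by simp only [m, Fin.lt_def]; omega)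
  have hcard : Nat.card {R // AboveInOtherRow R m} =
      2 * Nr * Nr.descFactorial (k - 1) * (2 * Nr - k).factorial := by
    rw [card_aboveInOtherRow, show 2 * Nr - 1 - m = k - 1 by simp only [m]; omega]
  rw [Nat.card_congr (Equiv.subtypeEquivRight hvalue),
    Nat.card_congr (Equiv.subtypeEquivRight hrows), hcard]
  exact ⟨two_mul_descFactorial_mul_factorial_div_factorial Nr k (by omega) (by omega),
    two_mul_descFactorial_mul_factorial_div_factorial Nr k (by omega) (by omega)⟩
end

section
/- For every integer N_r ≥ 2, the ORS event probabilities sum to one: (N_r − 1)/(2N_r − 1) + (N_r + 2)/(2(2N_r − 1)) + ∑_{k=4}^{N_r+1} [2·N_r·C(N_r, k−1) / ((2N_r − (k−1))·C(2N_r, k−1))] = 1 (the sum over k being empty when N_r = 2). -/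
/-!
With `r j = C(n, j) / C(2n, j)`, the ratio of consecutive binomial coefficients gives
`r (j + 1) = r j * (n - j) / (2n - j)`, so the `k`-th summand is the telescoping difference
`2 (r (k - 1) - r k)`. The sum therefore collapses to `2 r 3 = (n - 2) / (2 (2n - 1))`,
since `r (n + 1) = 0`, and the three terms add up to one.
-/

open Finset

theorem Nat.cast_choose_succ_mul {R : Type*} [CommRing R] (n k : ℕ) :
    (n.choose (k + 1) : R) * (k + 1) = n.choose k * (n - k) := by
  rcases le_or_gt k n with hkn | hnk
  · have h := congrArg (Nat.cast : ℕ → R) (Nat.choose_succ_right_eq n k)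
    push_cast [Nat.cast_sub hkn] at h
    exact h
  · simp [Nat.choose_eq_zero_of_lt hnk, Nat.choose_eq_zero_of_lt (hnk.trans (Nat.lt_succ_self k))]

section ChooseRatio

variable {K : Type*} [Field K] [CharZero K] {n m j : ℕ}

theorem choose_div_choose_succ (hj : j < m) :
    (n.choose (j + 1) : K) / m.choose (j + 1)
      = n.choose j / m.choose j * ((n : K) - j) / ((m : K) - j) := by
  have hm : (m.choose j : K) ≠ 0 := by exact_mod_cast (Nat.choose_pos hj.le).ne'
  have hmj : (m - j : K) ≠ 0 := sub_ne_zero.2 (by exact_mod_cast hj.ne')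
  have hj1 : (j + 1 : K) ≠ 0 := by exact_mod_cast j.succ_ne_zero
  rw [eq_div_of_mul_eq hj1 (Nat.cast_choose_succ_mul n j),
    eq_div_of_mul_eq hj1 (Nat.cast_choose_succ_mul m j)]
  field_simp

theorem choose_div_choose_sub_succ (hj : j < m) :
    (n.choose j : K) / m.choose j - n.choose (j + 1) / m.choose (j + 1)
      = (m - n) * n.choose j / ((m - j) * m.choose j) := by
  have hmj : (m - j : K) ≠ 0 := sub_ne_zero.2 (by exact_mod_cast hj.ne')
  rw [choose_div_choose_succ hj]
  field_simp
  ring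

theorem sum_Icc_choose_div_choose {a b : ℕ} (hab : a ≤ b + 1) (hb : b < m) :
    ∑ j ∈ Icc a b, (m - n) * (n.choose j : K) / ((m - j) * m.choose j)
      = n.choose a / m.choose a - n.choose (b + 1) / m.choose (b + 1) := by
  rcases hab.lt_or_eq with hab | rfl
  · have htelescope :=
      sum_Icc_sub (Nat.le_of_lt_succ hab) fun j ↦ -((n.choose j : K) / m.choose j)
    simp only [neg_sub_neg] at htelescope
    rw [← htelescope]
    refine sum_congr rfl fun j hj ↦ (choose_div_choose_sub_succ ?_).symm
    exact (mem_Icc.1 hj).2.trans_lt hb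
  · simp

theorem choose_three_div_choose_three_two_mul (hn : 2 ≤ n) :
    (n.choose 3 : K) / (2 * n).choose 3 = (n - 2) / (4 * (2 * n - 1)) := by
  have h0 : (n.choose 0 : K) / (2 * n).choose 0 = 1 := by simp
  rw [choose_div_choose_succ (by omega), choose_div_choose_succ (by omega),
    choose_div_choose_succ (by omega), h0]
  have : (n : K) ≠ 0 := by exact_mod_cast (by omega : n ≠ 0)
  have : (2 * n - 1 : K) ≠ 0 := sub_ne_zero.2 (by exact_mod_cast (by omega : 2 * n ≠ 1))
  have : (n - 1 : K) ≠ 0 := sub_ne_zero.2 (by exact_mod_cast (by omega : n ≠ 1))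
  push_cast
  field_simp
  ring

end ChooseRatio

/-- For every integer `Nr ≥ 2`, the ORS event probabilities sum to one:
`(Nr − 1)/(2Nr − 1) + (Nr + 2)/(2(2Nr − 1))
  + ∑_{k=4}^{Nr+1} 2·Nr·C(Nr, k−1)/((2Nr − (k−1))·C(2Nr, k−1)) = 1`. -/
theorem ORS_probabilities_sum_to_one (Nr : ℕ) (hNr : 2 ≤ Nr) :
    ((Nr : ℚ) - 1) / (2 * (Nr : ℚ) - 1)
      + ((Nr : ℚ) + 2) / (2 * (2 * (Nr : ℚ) - 1))
      + ∑ k ∈ Finset.Icc 4 (Nr + 1),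
          (2 * (Nr : ℚ) * (Nr.choose (k - 1) : ℚ))
            / ((2 * (Nr : ℚ) - ((k : ℚ) - 1)) * (((2 * Nr).choose (k - 1) : ℚ)))
      = 1 := by
  have htail : ∑ k ∈ Icc 4 (Nr + 1),
      (2 * (Nr : ℚ) * (Nr.choose (k - 1) : ℚ))
        / ((2 * (Nr : ℚ) - ((k : ℚ) - 1)) * (((2 * Nr).choose (k - 1) : ℚ)))
      = 2 * ∑ j ∈ Icc 3 Nr, (((2 * Nr : ℕ) : ℚ) - Nr) * Nr.choose j
          / ((((2 * Nr : ℕ) : ℚ) - j) * (2 * Nr).choose j) := by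
    rw [← map_add_right_Icc 3 Nr 1, sum_map, mul_sum]
    refine sum_congr rfl fun j _ ↦ ?_
    simp only [addRightEmbedding_apply, Nat.add_sub_cancel]
    push_cast
    ring
  rw [htail, sum_Icc_choose_div_choose (by omega) (by omega),
    Nat.choose_eq_zero_of_lt (Nat.lt_succ_self Nr), Nat.cast_zero, zero_div, sub_zero,
    choose_three_div_choose_three_two_mul hNr]
  have h2Nr : (Nr : ℚ) * 2 - 1 ≠ 0 := by
    have : (2 : ℚ) ≤ Nr := by exact_mod_cast hNr
    linarith
  field_simp
  ring
end

section
/- Let N_r ≥ 2 be an integer and let k be an integer with 4 ≤ k ≤ N_r + 2. Among all (2N_r)! bijections R from {1,2}×{1,…,N_r} to {1,…,2N_r}, the fraction of bijections for which the ranks of the 2nd through (k−1)-th largest entries all lie in one row, the largest rank and the k-th largest rank both lie in the other row, and the largest rank lies in the same column as the 2nd largest rank, equals 2·(N_r − 1)·C(N_r, k−2) / ((2N_r − (k−2))·(2N_r − (k−1))·C(2N_r, k−2)). -/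
open Nat Function

private lemma card_fiber_mul {A B : Type*} [Finite A] [Finite B] (F : A → B)
    (P : A → Prop) (T : B → Prop) (hPT : ∀ a, P a → T (F a)) (c : ℕ)
    (hfib : ∀ b : B, T b → Nat.card {a // P a ∧ F a = b} = c) :
    Nat.card {a // P a} = Nat.card {b // T b} * c := by
  classical
  let G : {a // P a} → {b // T b} := fun a => ⟨F a.1, hPT _ a.2⟩
  have e : {a // P a} ≃ Σ b : {b // T b}, {a // P a ∧ F a = b.val} :=
    (Equiv.sigmaFiberEquiv G).symm.trans (Equiv.sigmaCongrRight (fun b =>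
      { toFun := fun x => ⟨x.1.1, x.1.2, congrArg Subtype.val x.2⟩
        invFun := fun x => ⟨⟨x.1, x.2.1⟩, Subtype.ext x.2.2⟩
        left_inv := fun x => rfl
        right_inv := fun x => rfl }))
  have e2 : ∀ b : {b // T b}, {a // P a ∧ F a = b.val} ≃ Fin c := fun b =>
    (Finite.equivFin _).trans (finCongr (hfib b.1 b.2))
  rw [Nat.card_congr (e.trans ((Equiv.sigmaCongrRight e2).trans
    (Equiv.sigmaEquivProd _ (Fin c)))), Nat.card_prod]
  simp

private lemma card_ext {α γ : Type*} [Fintype α] [Fintype γ]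
    (h : Fintype.card α = Fintype.card γ) {m : ℕ} (e : Fin m ↪ α) (f : Fin m ↪ γ) :
    Nat.card {σ : α ≃ γ // ∀ j, σ (e j) = f j} = Nat.factorial (Fintype.card α - m) := by
  classical
  set s : Set α := Set.range e with hs
  set t : Set γ := Set.range f with ht
  let e₀ : s ≃ t := (Equiv.ofInjective e e.injective).symm.trans (Equiv.ofInjective f f.injective)
  have he₀ : ∀ j : Fin m, (e₀ ⟨e j, ⟨j, rfl⟩⟩ : γ) = f j := by
    intro j
    show (Equiv.ofInjective f f.injective ((Equiv.ofInjective e e.injective).symm ⟨e j, ⟨j, rfl⟩⟩) : γ) = f j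
    rw [Equiv.ofInjective_symm_apply]
    rfl
  have key : ∀ σ : α ≃ γ, (∀ j, σ (e j) = f j) ↔ (∀ x : s, σ x = e₀ x) := by
    intro σ
    constructor
    · rintro H ⟨x, j, rfl⟩
      rw [he₀ j]; exact H j
    · intro H j
      have := H ⟨e j, ⟨j, rfl⟩⟩
      rw [this, he₀ j]
  have E1 : {σ : α ≃ γ // ∀ j, σ (e j) = f j} ≃ {σ : α ≃ γ // ∀ x : s, σ x = e₀ x} :=
    Equiv.subtypeEquivRight key
  have E2 := Equiv.Set.compl e₀
  have hcs : Fintype.card (sᶜ : Set α) = Fintype.card α - m := by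
    rw [Fintype.card_compl_set, Fintype.card_range, Fintype.card_fin]
  have hct : Fintype.card (tᶜ : Set γ) = Fintype.card α - m := by
    rw [Fintype.card_compl_set, Fintype.card_range, Fintype.card_fin, h]
  rw [Nat.card_congr (E1.trans E2), Nat.card_eq_fintype_card,
    Fintype.card_equiv (Fintype.equivOfCardEq (hcs.trans hct.symm)), hcs]


private lemma fin2_sub_ne : ∀ y : Fin 2, 1 - y ≠ y := by decide
private lemma fin2_eq_sub_of_ne : ∀ x y : Fin 2, x ≠ y → x = 1 - y := by decide
private lemma fin2_trans : ∀ x y z : Fin 2, x ≠ y → z ≠ y → x = z := by decide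

private lemma cardTriple (Nr : ℕ) (b : Fin 2 × Fin Nr) :
    Nat.card {x : (Fin 2 × Fin Nr) × (Fin 2 × Fin Nr) × (Fin 2 × Fin Nr) //
      (x.1.1 ≠ x.2.1.1 ∧ x.2.2.1 ≠ x.2.1.1 ∧ x.1.2 = x.2.1.2 ∧ x.2.2 ≠ x.1) ∧ x.2.1 = b}
      = Nr - 1 := by
  classical
  have E : {x : (Fin 2 × Fin Nr) × (Fin 2 × Fin Nr) × (Fin 2 × Fin Nr) //
      (x.1.1 ≠ x.2.1.1 ∧ x.2.2.1 ≠ x.2.1.1 ∧ x.1.2 = x.2.1.2 ∧ x.2.2 ≠ x.1) ∧ x.2.1 = b}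
      ≃ {s : Fin Nr // ¬ s = b.2} :=
    { toFun := fun x => ⟨x.1.2.2.2, by
        obtain ⟨⟨a, b', t⟩, ⟨hab, htb, hcol, hta⟩, hb⟩ := x
        dsimp only at hab htb hcol hta hb ⊢
        subst hb
        intro h
        exact hta (Prod.ext (fin2_trans _ _ _ htb hab) (h.trans hcol.symm))⟩
      invFun := fun s => ⟨((1 - b.1, b.2), b, (1 - b.1, s.1)),
        ⟨fin2_sub_ne b.1, fin2_sub_ne b.1, rfl, fun h => s.2 (congrArg Prod.snd h)⟩, rfl⟩
      left_inv := fun x => by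
        obtain ⟨⟨a, b', t⟩, ⟨hab, htb, hcol, hta⟩, hb⟩ := x
        dsimp only at hab htb hcol hta hb ⊢
        subst hb
        refine Subtype.ext ?_
        dsimp only
        exact Prod.ext (Prod.ext (fin2_eq_sub_of_ne a.1 b'.1 hab).symm hcol.symm)
          (Prod.ext rfl (Prod.ext (fin2_eq_sub_of_ne t.1 b'.1 htb).symm rfl))
      right_inv := fun s => Subtype.ext rfl }
  rw [Nat.card_congr E, Nat.card_eq_fintype_card, Fintype.card_subtype_compl,
    Fintype.card_subtype_eq, Fintype.card_fin]



private def Qp (Nr k : ℕ) (hk4 : 4 ≤ k) (f : Fin k ↪ Fin 2 × Fin Nr) : Prop :=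
  ∃ i : Fin 2, (∀ j : Fin k, 1 ≤ j.val ∧ j.val ≤ k - 2 → (f j).1 = i) ∧
    (f ⟨k - 1, by omega⟩).1 ≠ i ∧ (f ⟨0, by omega⟩).1 ≠ i ∧
    (f ⟨k - 1, by omega⟩).2 = (f ⟨k - 2, by omega⟩).2

private def gfun (Nr k : ℕ) (hk4 : 4 ≤ k) (a b t : Fin 2 × Fin Nr)
    (m : Fin (k - 3) ↪ {c : Fin 2 × Fin Nr // c.1 = b.1 ∧ ¬ c.2 = b.2}) (j : Fin k) :
    Fin 2 × Fin Nr :=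
  if h0 : j.val = 0 then t
  else if h1 : j.val = k - 1 then a
  else if h2 : j.val = k - 2 then b
  else (m ⟨j.val - 1, by omega⟩ : {c : Fin 2 × Fin Nr // c.1 = b.1 ∧ ¬ c.2 = b.2})

section
variable {Nr k : ℕ} {hk4 : 4 ≤ k} {a b t : Fin 2 × Fin Nr}
  {m : Fin (k - 3) ↪ {c : Fin 2 × Fin Nr // c.1 = b.1 ∧ ¬ c.2 = b.2}}

private lemma gfun_zero {j : Fin k} (hj : j.val = 0) : gfun Nr k hk4 a b t m j = t := by
  simp only [gfun]; rw [dif_pos hj]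

private lemma gfun_last (hk4' : 4 ≤ k) {j : Fin k} (hj : j.val = k - 1) :
    gfun Nr k hk4 a b t m j = a := by
  simp only [gfun]; rw [dif_neg (by omega), dif_pos hj]

private lemma gfun_snd (hk4' : 4 ≤ k) {j : Fin k} (hj : j.val = k - 2) :
    gfun Nr k hk4 a b t m j = b := by
  simp only [gfun]; rw [dif_neg (by omega), dif_neg (by omega), dif_pos hj]

private lemma gfun_mid (hk4' : 4 ≤ k) {j : Fin k} (h1 : 1 ≤ j.val) (h2 : j.val ≤ k - 3) :
    gfun Nr k hk4 a b t m j = (m ⟨j.val - 1, by omega⟩ : _) := by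
  simp only [gfun]
  rw [dif_neg (by omega), dif_neg (by omega), dif_neg (by omega)]

private lemma gfun_inj (hk4' : 4 ≤ k) (hab : a.1 ≠ b.1) (htb : t.1 ≠ b.1) (hta : t ≠ a) :
    Function.Injective (gfun Nr k hk4 a b t m) := by
  intro j1 j2 h
  apply Fin.ext
  simp only [gfun] at h
  split_ifs at h
  all_goals first
  | omega
  | exact absurd h hta
  | exact absurd h.symm hta
  | exact absurd (congrArg Prod.fst h) htb
  | exact absurd (congrArg Prod.fst h.symm) htb
  | exact absurd (congrArg Prod.fst h) hab
  | exact absurd (congrArg Prod.fst h.symm) hab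
  | exact absurd ((congrArg Prod.fst h).trans (m _).2.1) htb
  | exact absurd ((congrArg Prod.fst h.symm).trans (m _).2.1) htb
  | exact absurd ((congrArg Prod.fst h).trans (m _).2.1) hab
  | exact absurd ((congrArg Prod.fst h.symm).trans (m _).2.1) hab
  | exact absurd (congrArg Prod.snd h.symm) (m _).2.2
  | exact absurd (congrArg Prod.snd h) (m _).2.2
  | (have h2 : j1.val - 1 = j2.val - 1 := congrArg Fin.val (m.injective (Subtype.ext h)); omega)
end

private lemma cardFiberQ (Nr k : ℕ) (hNr : 2 ≤ Nr) (hk4 : 4 ≤ k) (hk : k ≤ Nr + 2)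
    (a b t : Fin 2 × Fin Nr)
    (hab : a.1 ≠ b.1) (htb : t.1 ≠ b.1) (hcol : a.2 = b.2) (hta : t ≠ a) :
    Nat.card {f : Fin k ↪ Fin 2 × Fin Nr // Qp Nr k hk4 f ∧
      (f ⟨k - 1, by omega⟩, f ⟨k - 2, by omega⟩, f ⟨0, by omega⟩) = (a, b, t)}
      = (Nr - 1).descFactorial (k - 3) := by
  classical
  have E : {f : Fin k ↪ Fin 2 × Fin Nr // Qp Nr k hk4 f ∧
      (f ⟨k - 1, by omega⟩, f ⟨k - 2, by omega⟩, f ⟨0, by omega⟩) = (a, b, t)}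
      ≃ (Fin (k - 3) ↪ {c : Fin 2 × Fin Nr // c.1 = b.1 ∧ ¬ c.2 = b.2}) :=
    { toFun := fun x =>
        ⟨fun j => ⟨x.1 ⟨j.val + 1, by have := j.isLt; omega⟩, by
          obtain ⟨f, ⟨i, hmid, h1, h2, h3⟩, hF⟩ := x
          have hfb : f ⟨k - 2, by omega⟩ = b := congrArg (fun p => p.2.1) hF
          have hib : i = b.1 := by
            rw [← hfb]
            exact (hmid ⟨k - 2, by omega⟩ ⟨show 1 ≤ k - 2 by omega, show k - 2 ≤ k - 2 by omega⟩).symm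
          have hj1 : (f ⟨j.val + 1, by have := j.isLt; omega⟩).1 = b.1 := by
            rw [← hib]
            exact hmid _ ⟨show 1 ≤ j.val + 1 by omega, show j.val + 1 ≤ k - 2 by have := j.isLt; omega⟩
          refine ⟨hj1, fun hsnd => ?_⟩
          have heq : f ⟨j.val + 1, by have := j.isLt; omega⟩ = f ⟨k - 2, by omega⟩ :=
            (Prod.ext hj1 hsnd).trans hfb.symm
          have h5 : j.val + 1 = k - 2 := congrArg Fin.val (f.injective heq)
          have := j.isLt
          omega⟩, by
          intro j1 j2 hj
          have h5 := congrArg Subtype.val hj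
          have h6 : j1.val + 1 = j2.val + 1 := congrArg Fin.val (x.1.injective h5)
          exact Fin.ext (by omega)⟩
      invFun := fun m =>
        ⟨⟨gfun Nr k hk4 a b t m, gfun_inj hk4 hab htb hta⟩, by
          refine ⟨⟨b.1, ?_, ?_, ?_, ?_⟩, ?_⟩
          · intro j hj
            show (gfun Nr k hk4 a b t m j).1 = b.1
            by_cases hc : j.val = k - 2
            · rw [gfun_snd hk4 hc]
            · rw [gfun_mid hk4 hj.1 (by omega)]
              exact (m _).2.1
          · show (gfun Nr k hk4 a b t m ⟨k - 1, by omega⟩).1 ≠ b.1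
            rw [gfun_last hk4 rfl]; exact hab
          · show (gfun Nr k hk4 a b t m ⟨0, by omega⟩).1 ≠ b.1
            rw [gfun_zero rfl]; exact htb
          · show (gfun Nr k hk4 a b t m ⟨k - 1, by omega⟩).2
                = (gfun Nr k hk4 a b t m ⟨k - 2, by omega⟩).2
            rw [gfun_last hk4 rfl, gfun_snd hk4 rfl]; exact hcol
          · show (gfun Nr k hk4 a b t m ⟨k - 1, by omega⟩,
                gfun Nr k hk4 a b t m ⟨k - 2, by omega⟩,
                gfun Nr k hk4 a b t m ⟨0, by omega⟩) = (a, b, t)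
            rw [gfun_last hk4 rfl, gfun_snd hk4 rfl, gfun_zero rfl]⟩
      left_inv := fun x => by
        obtain ⟨f, hQ, hF⟩ := x
        refine Subtype.ext (DFunLike.ext _ _ (fun j => ?_))
        show gfun Nr k hk4 a b t _ j = f j
        have hft : f ⟨0, by omega⟩ = t := congrArg (fun p => p.2.2) hF
        have hfb : f ⟨k - 2, by omega⟩ = b := congrArg (fun p => p.2.1) hF
        have hfa : f ⟨k - 1, by omega⟩ = a := congrArg (fun p => p.1) hF
        have hjlt := j.isLt
        by_cases h0 : j.val = 0
        · rw [gfun_zero h0, ← hft]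
          exact congrArg f (Fin.ext (show (0:ℕ) = j.val by omega))
        · by_cases h1 : j.val = k - 1
          · rw [gfun_last hk4 h1, ← hfa]
            exact congrArg f (Fin.ext (show (k-1:ℕ) = j.val by omega))
          · by_cases h2 : j.val = k - 2
            · rw [gfun_snd hk4 h2, ← hfb]
              exact congrArg f (Fin.ext (show (k-2:ℕ) = j.val by omega))
            · rw [gfun_mid hk4 (by omega) (by omega)]
              exact congrArg f (Fin.ext (show (j.val - 1 + 1 : ℕ) = j.val by omega))
      right_inv := fun m => by
        refine DFunLike.ext _ _ (fun j => ?_)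
        refine Subtype.ext ?_
        have hjlt := j.isLt
        show gfun Nr k hk4 a b t m ⟨j.val + 1, by omega⟩ = (m j : Fin 2 × Fin Nr)
        rw [gfun_mid hk4 (show 1 ≤ j.val + 1 by omega) (show j.val + 1 ≤ k - 3 by omega)]
        exact congrArg (fun jj => (m jj : Fin 2 × Fin Nr))
          (Fin.ext (show (j.val + 1 - 1 : ℕ) = j.val by omega)) }
  rw [Nat.card_congr E, Nat.card_eq_fintype_card, Fintype.card_embedding_eq, Fintype.card_fin]
  have hc : Fintype.card {c : Fin 2 × Fin Nr // c.1 = b.1 ∧ ¬ c.2 = b.2} = Nr - 1 := by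
    have E2 : {c : Fin 2 × Fin Nr // c.1 = b.1 ∧ ¬ c.2 = b.2} ≃ {s : Fin Nr // ¬ s = b.2} :=
      { toFun := fun c => ⟨c.1.2, c.2.2⟩
        invFun := fun s => ⟨(b.1, s.1), rfl, s.2⟩
        left_inv := fun c => Subtype.ext (Prod.ext c.2.1.symm rfl)
        right_inv := fun s => Subtype.ext rfl }
    rw [Fintype.card_congr E2, Fintype.card_subtype_compl, Fintype.card_subtype_eq,
      Fintype.card_fin]
  rw [hc]

private lemma cardQ (Nr k : ℕ) (hNr : 2 ≤ Nr) (hk4 : 4 ≤ k) (hk : k ≤ Nr + 2) :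
    Nat.card {f : Fin k ↪ Fin 2 × Fin Nr // Qp Nr k hk4 f} =
      2 * Nr * (Nr - 1) * (Nr - 1).descFactorial (k - 3) := by
  classical
  have step := card_fiber_mul
    (fun f : Fin k ↪ Fin 2 × Fin Nr => (f ⟨k - 1, by omega⟩, f ⟨k - 2, by omega⟩, f ⟨0, by omega⟩))
    (Qp Nr k hk4)
    (fun x => x.1.1 ≠ x.2.1.1 ∧ x.2.2.1 ≠ x.2.1.1 ∧ x.1.2 = x.2.1.2 ∧ x.2.2 ≠ x.1)
    ?hPT ((Nr - 1).descFactorial (k - 3)) ?hfib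
  · rw [step]
    have step2 := card_fiber_mul
      (fun x : (Fin 2 × Fin Nr) × (Fin 2 × Fin Nr) × (Fin 2 × Fin Nr) => x.2.1)
      (fun x => x.1.1 ≠ x.2.1.1 ∧ x.2.2.1 ≠ x.2.1.1 ∧ x.1.2 = x.2.1.2 ∧ x.2.2 ≠ x.1)
      (fun _ => True) (fun _ _ => trivial) (Nr - 1) (fun b _ => cardTriple Nr b)
    rw [step2]
    have : Nat.card {b : Fin 2 × Fin Nr // True} = 2 * Nr := by
      rw [Nat.card_congr (Equiv.subtypeUnivEquiv fun _ => trivial)]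
      simp [Nat.card_eq_fintype_card]
    rw [this, Nat.mul_assoc]
  case hPT =>
    rintro f ⟨i, hmid, ha, ht, hcol⟩
    have hb : (f ⟨k - 2, by omega⟩).1 = i :=
      hmid _ ⟨show 1 ≤ k - 2 by omega, show k - 2 ≤ k - 2 by omega⟩
    refine ⟨by rw [hb]; exact ha, by rw [hb]; exact ht, hcol, ?_⟩
    intro hEq
    have h5 : (0 : ℕ) = k - 1 := congrArg Fin.val (f.injective hEq)
    omega
  case hfib =>
    rintro ⟨a, b, t⟩ ⟨hab, htb, hcol, hta⟩
    exact cardFiberQ Nr k hNr hk4 hk a b t hab htb hcol hta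

private def embN (Nr k : ℕ) (h : k ≤ 2 * Nr) : Fin k ↪ Fin (2 * Nr) :=
  ⟨fun j => ⟨2 * Nr - k + j.val, by have := j.isLt; omega⟩, fun j1 j2 hj => by
    have h5 : 2 * Nr - k + j1.val = 2 * Nr - k + j2.val := congrArg Fin.val hj
    exact Fin.ext (by omega)⟩

private lemma cardSigma (Nr k : ℕ) (hNr : 2 ≤ Nr) (hk4 : 4 ≤ k) (hk : k ≤ Nr + 2)
    (hkN : k ≤ 2 * Nr) :
    Nat.card {σ : Fin (2 * Nr) ≃ Fin 2 × Fin Nr //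
      Qp Nr k hk4 ((embN Nr k hkN).trans σ.toEmbedding)} =
      2 * Nr * (Nr - 1) * (Nr - 1).descFactorial (k - 3) * (2 * Nr - k)! := by
  classical
  have step := card_fiber_mul
    (fun σ : Fin (2 * Nr) ≃ Fin 2 × Fin Nr => (embN Nr k hkN).trans σ.toEmbedding)
    (fun σ => Qp Nr k hk4 ((embN Nr k hkN).trans σ.toEmbedding))
    (Qp Nr k hk4) (fun _ h => h) ((2 * Nr - k)!) ?hfib
  · rw [step, cardQ Nr k hNr hk4 hk]
  case hfib =>
    intro f hf
    have E : {σ : Fin (2 * Nr) ≃ Fin 2 × Fin Nr //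
        Qp Nr k hk4 ((embN Nr k hkN).trans σ.toEmbedding) ∧
          (embN Nr k hkN).trans σ.toEmbedding = f}
        ≃ {σ : Fin (2 * Nr) ≃ Fin 2 × Fin Nr // ∀ j, σ (embN Nr k hkN j) = f j} := by
      refine Equiv.subtypeEquivRight (fun σ => ⟨fun h j => by rw [← h.2]; rfl, fun h => ?_⟩)
      have he : (embN Nr k hkN).trans σ.toEmbedding = f := DFunLike.ext _ _ (fun j => h j)
      exact ⟨by rw [he]; exact hf, he⟩
    rw [Nat.card_congr E, card_ext (by simp) (embN Nr k hkN) f, Fintype.card_fin]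


/-- For `Nr ≥ 2` and `4 ≤ k ≤ Nr + 2`, among all `(2·Nr)!` bijections `R` from
`{1,2} × {1,…,Nr}` to `{1,…,2·Nr}` (the rank of cell `c` is `(R c).val + 1`; the
`m`-th largest entry is the cell of rank `2·Nr − m + 1`), the fraction of
bijections for which the ranks of the 2nd through `(k−1)`-th largest entries all
lie in one row, the largest rank and the `k`-th largest rank both lie in the
other row, and the largest rank lies in the same column as the 2nd largest rank,
equals `2·(Nr − 1)·C(Nr, k−2) / ((2·Nr − (k−2))·(2·Nr − (k−1))·C(2·Nr, k−2))`. -/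
theorem SRS_event_kth_largest_fraction (Nr k : ℕ) (hNr : 2 ≤ Nr)
    (hk4 : 4 ≤ k) (hk : k ≤ Nr + 2) :
    (Nat.card {R : (Fin 2 × Fin Nr) ≃ Fin (2 * Nr) //
        ∃ i : Fin 2,
          (∀ c : Fin 2 × Fin Nr,
            2 * Nr - (k - 1) ≤ (R c).val ∧ (R c).val ≤ 2 * Nr - 2 → c.1 = i) ∧
          (R.symm ⟨2 * Nr - 1, by omega⟩).1 ≠ i ∧
          (R.symm ⟨2 * Nr - k, by omega⟩).1 ≠ i ∧
          (R.symm ⟨2 * Nr - 1, by omega⟩).2 = (R.symm ⟨2 * Nr - 2, by omega⟩).2} : ℝ)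
      / (Nat.factorial (2 * Nr) : ℝ)
      = (2 * ((Nr : ℝ) - 1) * (Nr.choose (k - 2) : ℝ))
        / ((2 * (Nr : ℝ) - ((k : ℝ) - 2)) * (2 * (Nr : ℝ) - ((k : ℝ) - 1))
            * (((2 * Nr).choose (k - 2) : ℝ))) := by
  classical
  have hkN : k ≤ 2 * Nr := by omega
  have embN_val : ∀ j : Fin k, (embN Nr k hkN j).val = 2 * Nr - k + j.val := fun j => rfl
  have e1 : ∀ p : k - 1 < k, embN Nr k hkN ⟨k - 1, p⟩ = (⟨2 * Nr - 1, by omega⟩ : Fin (2 * Nr)) :=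
    fun p => Fin.ext (by rw [embN_val]; dsimp only; omega)
  have e2 : ∀ p : k - 2 < k, embN Nr k hkN ⟨k - 2, p⟩ = (⟨2 * Nr - 2, by omega⟩ : Fin (2 * Nr)) :=
    fun p => Fin.ext (by rw [embN_val]; dsimp only; omega)
  have e0 : ∀ p : 0 < k, embN Nr k hkN ⟨0, p⟩ = (⟨2 * Nr - k, by omega⟩ : Fin (2 * Nr)) :=
    fun p => Fin.ext (by rw [embN_val]; dsimp only; omega)
  have hQPiff : ∀ σ : Fin (2 * Nr) ≃ Fin 2 × Fin Nr,
      Qp Nr k hk4 ((embN Nr k hkN).trans σ.toEmbedding) ↔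
      (∃ i : Fin 2,
        (∀ j : Fin k, 1 ≤ j.val ∧ j.val ≤ k - 2 → (σ (embN Nr k hkN j)).1 = i) ∧
        (σ ⟨2 * Nr - 1, by omega⟩).1 ≠ i ∧
        (σ ⟨2 * Nr - k, by omega⟩).1 ≠ i ∧
        (σ ⟨2 * Nr - 1, by omega⟩).2 = (σ ⟨2 * Nr - 2, by omega⟩).2) := by
    intro σ
    simp only [Qp, Function.Embedding.trans_apply, Equiv.coe_toEmbedding]
    rw [e1 _, e2 _, e0 _]
  have hiff : ∀ R : (Fin 2 × Fin Nr) ≃ Fin (2 * Nr),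
      (∃ i : Fin 2,
        (∀ c : Fin 2 × Fin Nr,
          2 * Nr - (k - 1) ≤ (R c).val ∧ (R c).val ≤ 2 * Nr - 2 → c.1 = i) ∧
        (R.symm ⟨2 * Nr - 1, by omega⟩).1 ≠ i ∧
        (R.symm ⟨2 * Nr - k, by omega⟩).1 ≠ i ∧
        (R.symm ⟨2 * Nr - 1, by omega⟩).2 = (R.symm ⟨2 * Nr - 2, by omega⟩).2)
      ↔ Qp Nr k hk4 ((embN Nr k hkN).trans R.symm.toEmbedding) := by
    intro R
    rw [hQPiff R.symm]
    constructor
    · rintro ⟨i, hall, ha, ht, hcol⟩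
      refine ⟨i, ?_, ha, ht, hcol⟩
      rintro j ⟨hj1, hj2⟩
      have hjlt := j.isLt
      refine hall (R.symm (embN Nr k hkN j)) ⟨?_, ?_⟩
      · rw [Equiv.apply_symm_apply, embN_val]; omega
      · rw [Equiv.apply_symm_apply, embN_val]; omega
    · rintro ⟨i, hall, ha, ht, hcol⟩
      refine ⟨i, ?_, ha, ht, hcol⟩
      rintro c ⟨hc1, hc2⟩
      have hlt := (R c).isLt
      have hemb : embN Nr k hkN ⟨(R c).val - (2 * Nr - k), by omega⟩ = R c :=
        Fin.ext (by rw [embN_val]; dsimp only; omega)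
      have h6 := hall ⟨(R c).val - (2 * Nr - k), by omega⟩
        ⟨show 1 ≤ (R c).val - (2 * Nr - k) by omega,
         show (R c).val - (2 * Nr - k) ≤ k - 2 by omega⟩
      rw [hemb, Equiv.symm_apply_apply] at h6
      exact h6
  have EE : {R : (Fin 2 × Fin Nr) ≃ Fin (2 * Nr) //
        ∃ i : Fin 2,
          (∀ c : Fin 2 × Fin Nr,
            2 * Nr - (k - 1) ≤ (R c).val ∧ (R c).val ≤ 2 * Nr - 2 → c.1 = i) ∧
          (R.symm ⟨2 * Nr - 1, by omega⟩).1 ≠ i ∧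
          (R.symm ⟨2 * Nr - k, by omega⟩).1 ≠ i ∧
          (R.symm ⟨2 * Nr - 1, by omega⟩).2 = (R.symm ⟨2 * Nr - 2, by omega⟩).2} ≃
      {σ : Fin (2 * Nr) ≃ Fin 2 × Fin Nr //
        Qp Nr k hk4 ((embN Nr k hkN).trans σ.toEmbedding)} :=
    Equiv.subtypeEquiv ⟨Equiv.symm, Equiv.symm, fun e => e.symm_symm, fun e => e.symm_symm⟩ hiff
  have hcard : Nat.card {R : (Fin 2 × Fin Nr) ≃ Fin (2 * Nr) //
        ∃ i : Fin 2,
          (∀ c : Fin 2 × Fin Nr,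
            2 * Nr - (k - 1) ≤ (R c).val ∧ (R c).val ≤ 2 * Nr - 2 → c.1 = i) ∧
          (R.symm ⟨2 * Nr - 1, by omega⟩).1 ≠ i ∧
          (R.symm ⟨2 * Nr - k, by omega⟩).1 ≠ i ∧
          (R.symm ⟨2 * Nr - 1, by omega⟩).2 = (R.symm ⟨2 * Nr - 2, by omega⟩).2}
      = 2 * Nr * (Nr - 1) * (Nr - 1).descFactorial (k - 3) * (2 * Nr - k)! :=
    (Nat.card_congr EE).trans (cardSigma Nr k hNr hk4 hk hkN)
  rw [hcard]
  have h2N : k - 2 ≤ 2 * Nr := by omega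
  have F3 : (2 * Nr).choose (k - 2) * (k - 2)! * (2 * Nr - (k - 2))! = (2 * Nr)! :=
    Nat.choose_mul_factorial_mul_factorial h2N
  have F4 : (2 * Nr - (k - 2))! = (2 * Nr - k + 1 + 1) * ((2 * Nr - k + 1) * (2 * Nr - k)!) := by
    rw [show 2 * Nr - (k - 2) = 2 * Nr - k + 1 + 1 by omega, Nat.factorial_succ,
      Nat.factorial_succ]
  have Fg : (k - 2)! * Nr.choose (k - 2) = Nr * (Nr - 1).descFactorial (k - 3) := by
    have h1 := Nat.descFactorial_eq_factorial_mul_choose Nr (k - 2)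
    have h2 := Nat.succ_descFactorial_succ (Nr - 1) (k - 3)
    rw [show Nr - 1 + 1 = Nr by omega, show k - 3 + 1 = k - 2 by omega] at h2
    rw [← h1, h2]
  have hkr : (k : ℝ) ≤ 2 * Nr := by exact_mod_cast hkN
  have d1 : (0:ℝ) < 2 * (Nr:ℝ) - ((k:ℝ) - 2) := by linarith
  have d2 : (0:ℝ) < 2 * (Nr:ℝ) - ((k:ℝ) - 1) := by linarith
  have d3 : (0:ℝ) < (((2 * Nr).choose (k - 2)) : ℝ) := by exact_mod_cast Nat.choose_pos h2N
  have dfac : (0:ℝ) < ((2 * Nr)! : ℝ) := by exact_mod_cast Nat.factorial_pos _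
  rw [div_eq_div_iff dfac.ne' (mul_pos (mul_pos d1 d2) d3).ne']
  have C3 : (((2 * Nr).choose (k - 2)) : ℝ) * ((k - 2)! : ℝ) * ((2 * Nr - (k - 2))! : ℝ)
      = ((2 * Nr)! : ℝ) := by exact_mod_cast F3
  have C4 : ((2 * Nr - (k - 2))! : ℝ)
      = (2 * (Nr:ℝ) - (k:ℝ) + 1 + 1) * ((2 * (Nr:ℝ) - (k:ℝ) + 1) * ((2 * Nr - k)! : ℝ)) := by
    have h9 : ((2 * Nr - (k - 2))! : ℝ)
        = ((2 * Nr - k + 1 + 1 : ℕ) : ℝ) * (((2 * Nr - k + 1 : ℕ) : ℝ) * ((2 * Nr - k)! : ℝ)) := by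
      exact_mod_cast congrArg (fun n : ℕ => (n : ℝ)) F4
    rw [h9]
    push_cast [Nat.cast_sub hkN]
    ring
  have Cg : ((k - 2)! : ℝ) * ((Nr.choose (k - 2)) : ℝ)
      = (Nr : ℝ) * (((Nr - 1).descFactorial (k - 3)) : ℝ) := by exact_mod_cast Fg
  push_cast [Nat.cast_sub hkN, Nat.cast_sub (show 1 ≤ Nr by omega)]
  linear_combination (2*((Nr:ℝ)-1)*((Nr.choose (k-2)):ℝ)) * C3
    - (2*((Nr:ℝ)-1)*((Nr.choose (k-2)):ℝ)*(((2*Nr).choose (k-2)):ℝ)*((k-2)! : ℝ)) * C4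
    - (2*((Nr:ℝ)-1)*(((2*Nr).choose (k-2)):ℝ)*(2*(Nr:ℝ)-((k:ℝ)-2))*(2*(Nr:ℝ)-((k:ℝ)-1))
        *((2*Nr-k)! : ℝ)) * Cg
end

section
/- For every integer N_r ≥ 2, the SRS event probabilities sum to one: (N_r − 1)/(2N_r − 1) + (N_r + 1)/(2(2N_r − 1)) + ∑_{k=4}^{N_r+1} [2·N_r·C(N_r, k−1) / ((2N_r − (k−1))·C(2N_r, k−1))] + ∑_{k=4}^{N_r+2} [2·(N_r − 1)·C(N_r, k−2) / ((2N_r − (k−2))·(2N_r − (k−1))·C(2N_r, k−2))] = 1 (the first sum being empty when N_r = 2). -/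
/-!
With `r j = C(n, j) / C(2n, j)` one has `r (j + 1) * (2n - j) = r j * (n - j)`. Hence the `j`-th
summand of the first sum is `2 (r j - r (j + 1))` and that of the second is
`2 (r j / (2n - j) - r (j + 1) / (2n - j - 1))`, so both telescope (`r (n + 1) = 0`), leaving
`2 r 3 + 2 r 2 / (2n - 2) = r 2 = (n - 1) / (2 (2n - 1))`, which the two leading terms complete to `1`.
-/

open Finset

theorem Nat.cast_choose_succ {K : Type*} [Field K] [CharZero K] (n j : ℕ) :
    (n.choose (j + 1) : K) = n.choose j * (n - j) / (j + 1) := by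
  rw [eq_div_iff (Nat.cast_add_one_ne_zero j)]
  rcases le_or_gt j n with hj | hj
  · rw [← Nat.cast_sub hj]
    exact_mod_cast Nat.choose_succ_right_eq n j
  · simp [Nat.choose_eq_zero_of_lt hj, Nat.choose_eq_zero_of_lt (Nat.lt_succ_of_lt hj)]

def chooseRatio (n m j : ℕ) : ℚ := n.choose j / m.choose j

section chooseRatio

variable {n m j : ℕ}

theorem chooseRatio_eq_zero_of_lt (h : n < j) : chooseRatio n m j = 0 := by
  simp [chooseRatio, Nat.choose_eq_zero_of_lt h]

theorem chooseRatio_succ_mul (hj : j < m) :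
    chooseRatio n m (j + 1) * (m - j) = chooseRatio n m j * (n - j) := by
  have hmj : (m : ℚ) - j ≠ 0 := sub_ne_zero.2 (by exact_mod_cast hj.ne')
  unfold chooseRatio
  rw [Nat.cast_choose_succ n, Nat.cast_choose_succ m]
  field_simp

theorem chooseRatio_sub_succ (hj : j < m) :
    chooseRatio n m j - chooseRatio n m (j + 1) = (m - n) * chooseRatio n m j / (m - j) := by
  have hmj : (m : ℚ) - j ≠ 0 := sub_ne_zero.2 (by exact_mod_cast hj.ne')
  rw [eq_div_iff hmj]
  linear_combination -chooseRatio_succ_mul (n := n) hj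

theorem chooseRatio_div_sub_succ (hj : j + 1 < m) :
    chooseRatio n m j / (m - j) - chooseRatio n m (j + 1) / (m - (j + 1))
      = (m - n - 1) * chooseRatio n m j / ((m - j) * (m - (j + 1))) := by
  have hmj : (m : ℚ) - j ≠ 0 := sub_ne_zero.2 (by exact_mod_cast (by omega : j ≠ m).symm)
  have hmj' : (m : ℚ) - (j + 1) ≠ 0 := sub_ne_zero.2 (by exact_mod_cast hj.ne')
  have hrec := chooseRatio_succ_mul (n := n) (by omega : j < m)
  field_simp
  linear_combination -hrec

theorem chooseRatio_two_mul_two {n : ℕ} (hn : n ≠ 0) :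
    chooseRatio n (2 * n) 2 = (n - 1) / (2 * (2 * n - 1)) := by
  have h : (2 * n - 1 : ℚ) ≠ 0 := by
    have : (1 : ℚ) ≤ n := by exact_mod_cast Nat.one_le_iff_ne_zero.2 hn
    linarith
  unfold chooseRatio
  rw [Nat.cast_choose_two, Nat.cast_choose_two]
  push_cast
  field_simp

end chooseRatio

section twoMul

variable {n j : ℕ}

theorem two_mul_choose_div_eq_chooseRatio_sub (hj : j < 2 * n) :
    2 * (n : ℚ) * n.choose j / ((2 * n - j) * (2 * n).choose j)
      = 2 * chooseRatio n (2 * n) j - 2 * chooseRatio n (2 * n) (j + 1) := by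
  have hmj : (2 * n - j : ℚ) ≠ 0 := sub_ne_zero.2 (by exact_mod_cast hj.ne')
  rw [← mul_sub, chooseRatio_sub_succ hj, chooseRatio]
  push_cast
  field_simp
  ring

theorem two_mul_choose_div_eq_chooseRatio_div_sub (hj : j + 1 < 2 * n) :
    2 * ((n : ℚ) - 1) * n.choose j / ((2 * n - j) * (2 * n - (j + 1)) * (2 * n).choose j)
      = 2 * (chooseRatio n (2 * n) j / (2 * n - j))
        - 2 * (chooseRatio n (2 * n) (j + 1) / (2 * n - (j + 1))) := by
  have hmj : (2 * n - j : ℚ) ≠ 0 := sub_ne_zero.2 (by exact_mod_cast (by omega : j ≠ 2 * n).symm)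
  have hmj' : (2 * n - (j + 1) : ℚ) ≠ 0 := sub_ne_zero.2 (by exact_mod_cast hj.ne')
  have h := chooseRatio_div_sub_succ (n := n) hj
  push_cast at h
  rw [← mul_sub, h, chooseRatio]
  field_simp
  ring

end twoMul

theorem Finset.sum_Icc_sub_succ {M : Type*} [AddCommGroup M] {a b : ℕ} (h : a ≤ b + 1)
    (f : ℕ → M) : ∑ k ∈ Icc a b, (f k - f (k + 1)) = f a - f (b + 1) := by
  rw [← Finset.Ico_add_one_right_eq_Icc]
  simpa only [neg_sub_neg] using Finset.sum_Ico_sub (fun k => -f k) h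

theorem sum_Icc_two_mul_choose_div {n : ℕ} (hn : 2 ≤ n) :
    ∑ k ∈ Icc 4 (n + 1), 2 * (n : ℚ) * n.choose (k - 1)
        / ((2 * n - ((k : ℚ) - 1)) * (2 * n).choose (k - 1))
      = 2 * chooseRatio n (2 * n) 3 := by
  rw [Finset.sum_congr rfl (g := fun k => 2 * chooseRatio n (2 * n) (k - 1)
      - 2 * chooseRatio n (2 * n) (k + 1 - 1)), Finset.sum_Icc_sub_succ (by omega)]
  · simp [chooseRatio_eq_zero_of_lt (Nat.lt_succ_self n)]
  intro k hk
  obtain ⟨j, rfl⟩ : ∃ j, k = j + 1 := ⟨k - 1, by grind⟩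
  simp only [Nat.add_sub_cancel, Nat.cast_add, Nat.cast_one, add_sub_cancel_right]
  exact two_mul_choose_div_eq_chooseRatio_sub (by grind)

theorem sum_Icc_two_mul_pred_choose_div {n : ℕ} (hn : 1 ≤ n) :
    ∑ k ∈ Icc 4 (n + 2), 2 * ((n : ℚ) - 1) * n.choose (k - 2)
        / ((2 * n - ((k : ℚ) - 2)) * (2 * n - ((k : ℚ) - 1)) * (2 * n).choose (k - 2))
      = 2 * (chooseRatio n (2 * n) 2 / (2 * n - 2)) := by
  rw [Finset.sum_congr rfl (g := fun k => 2 * (chooseRatio n (2 * n) (k - 2) / (2 * n - (k - 2 : ℕ)))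
      - 2 * (chooseRatio n (2 * n) (k + 1 - 2) / (2 * n - (k + 1 - 2 : ℕ)))),
    Finset.sum_Icc_sub_succ (by omega)]
  · simp [show n + 2 + 1 - 2 = n + 1 by omega, chooseRatio_eq_zero_of_lt (Nat.lt_succ_self n)]
  intro k hk
  obtain ⟨j, rfl⟩ : ∃ j, k = j + 2 := ⟨k - 2, by grind⟩
  simp only [Nat.add_sub_cancel, show j + 2 + 1 - 2 = j + 1 by omega]
  push_cast
  rw [add_sub_cancel_right, show (j : ℚ) + 2 - 1 = j + 1 by ring]
  exact two_mul_choose_div_eq_chooseRatio_div_sub (by grind)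

/-- For every integer `Nr ≥ 2`, the SRS event probabilities sum to one:
`(Nr − 1)/(2Nr − 1) + (Nr + 1)/(2(2Nr − 1))
  + ∑_{k=4}^{Nr+1} 2·Nr·C(Nr, k−1)/((2Nr − (k−1))·C(2Nr, k−1))
  + ∑_{k=4}^{Nr+2} 2·(Nr − 1)·C(Nr, k−2)/((2Nr − (k−2))·(2Nr − (k−1))·C(2Nr, k−2)) = 1`. -/
theorem SRS_probabilities_sum_to_one (Nr : ℕ) (hNr : 2 ≤ Nr) :
    ((Nr : ℚ) - 1) / (2 * (Nr : ℚ) - 1)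
      + ((Nr : ℚ) + 1) / (2 * (2 * (Nr : ℚ) - 1))
      + ∑ k ∈ Finset.Icc 4 (Nr + 1),
          (2 * (Nr : ℚ) * (Nr.choose (k - 1) : ℚ))
            / ((2 * (Nr : ℚ) - ((k : ℚ) - 1)) * (((2 * Nr).choose (k - 1) : ℚ)))
      + ∑ k ∈ Finset.Icc 4 (Nr + 2),
          (2 * ((Nr : ℚ) - 1) * (Nr.choose (k - 2) : ℚ))
            / ((2 * (Nr : ℚ) - ((k : ℚ) - 2)) * (2 * (Nr : ℚ) - ((k : ℚ) - 1))
                * (((2 * Nr).choose (k - 2) : ℚ)))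
      = 1 := by
  rw [sum_Icc_two_mul_choose_div hNr, sum_Icc_two_mul_pred_choose_div (by omega)]
  set r := chooseRatio Nr (2 * Nr)
  have hN : (2 : ℚ) ≤ Nr := by exact_mod_cast hNr
  have hr₃ : r 3 = r 2 * (Nr - 2) / (2 * Nr - 2) := by
    rw [eq_div_iff (by linarith)]
    exact_mod_cast chooseRatio_succ_mul (n := Nr) (show 2 < 2 * Nr by omega)
  have hr₂ : r 2 = (Nr - 1) / (2 * (2 * Nr - 1)) := chooseRatio_two_mul_two (by omega)
  have hN₁ : (Nr - 1 : ℚ) ≠ 0 := by linarith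
  rw [hr₃, hr₂]
  field_simp
  rw [div_eq_iff (by linarith)]
  ring
end

section
/- Let N and N_r be integers with 2 ≤ N ≤ N_r, set n = N·N_r, and for N ≤ k ≤ (N−1)·N_r + 1 define G_{n,k}(u) = ∑_{i=0}^{k−1} [n!·C(k−1,i)·(−1)^i / ((n−k+i+1)·(n−k)!·(k−1)!)] · u^{n−k+i+1}. Let p_N, …, p_{(N−1)N_r+1} be nonnegative reals summing to 1. Then lim_{u→0⁺} [∑_{k=N}^{(N−1)N_r+1} p_k · G_{n,k}(u)] / u^{N_r} = p_{(N−1)N_r+1} · (N·N_r)! / (N_r · (N_r − 1)! · ((N−1)·N_r)!). -/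
/-!
Each `G_{n,k}` is `u ^ (n - k + 1)` times a polynomial whose constant term is its `i = 0`
coefficient. For `k ≤ (N - 1) Nr + 1` the exponent `n - k + 1` is at least `Nr`, with equality
only for the last index `k = (N - 1) Nr + 1`; so after dividing by `u ^ Nr` every summand is
continuous at `0`, and only the last one survives there.
-/

open Filter Topology Finset

/-- `G n k u = ∑_{i=0}^{k−1} n!·C(k−1,i)·(−1)^i / ((n−k+i+1)(n−k)!(k−1)!) · u^{n−k+i+1}`,
the CDF of the `k`-th largest of `n` i.i.d. random variables expressed as a
polynomial in the common per-entry CDF value `u`. -/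
noncomputable def orderCDF (n k : ℕ) (u : ℝ) : ℝ :=
  ∑ i ∈ Finset.range k,
    ((n.factorial : ℝ) * (((k - 1).choose i : ℝ)) * (-1 : ℝ) ^ i
        / (((n : ℝ) - (k : ℝ) + (i : ℝ) + 1) * ((n - k).factorial : ℝ)
            * ((k - 1).factorial : ℝ)))
      * u ^ (n - k + i + 1)

noncomputable def orderCDFCoeff (n k i : ℕ) : ℝ :=
  (n.factorial : ℝ) * (((k - 1).choose i : ℝ)) * (-1 : ℝ) ^ i
    / (((n : ℝ) - (k : ℝ) + (i : ℝ) + 1) * ((n - k).factorial : ℝ) * ((k - 1).factorial : ℝ))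

noncomputable def orderCDFQuot (n k : ℕ) (u : ℝ) : ℝ :=
  ∑ i ∈ range k, orderCDFCoeff n k i * u ^ i

theorem orderCDF_eq_pow_mul_orderCDFQuot (n k : ℕ) (u : ℝ) :
    orderCDF n k u = u ^ (n - k + 1) * orderCDFQuot n k u := by
  rw [orderCDF, orderCDFQuot, mul_sum]
  refine sum_congr rfl fun i _ => ?_
  rw [orderCDFCoeff, add_right_comm, pow_add]
  ring

theorem continuous_orderCDFQuot (n k : ℕ) : Continuous (orderCDFQuot n k) := by
  unfold orderCDFQuot
  fun_prop

theorem orderCDFQuot_zero {n k : ℕ} (hk : k ≠ 0) :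
    orderCDFQuot n k 0 = orderCDFCoeff n k 0 := by
  obtain ⟨j, rfl⟩ := Nat.exists_eq_succ_of_ne_zero hk
  simp [orderCDFQuot, sum_range_succ']

theorem orderCDFCoeff_zero {n k : ℕ} (hk : k ≤ n) :
    orderCDFCoeff n k 0 =
      (n.factorial : ℝ) / (((n - k + 1 : ℕ) : ℝ) * (n - k).factorial * (k - 1).factorial) := by
  have hcast : ((n - k + 1 : ℕ) : ℝ) = (n : ℝ) - k + 1 := by
    rw [Nat.cast_add_one, Nat.cast_sub hk]
  simp [orderCDFCoeff, hcast]

theorem tendsto_pow_mul_div_pow_nhdsNE_zero {g : ℝ → ℝ} (hg : ContinuousAt g 0) {a m : ℕ}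
    (hma : m ≤ a) :
    Tendsto (fun u => u ^ a * g u / u ^ m) (𝓝[≠] 0) (𝓝 (0 ^ (a - m) * g 0)) := by
  have hcont : ContinuousAt (fun u : ℝ => u ^ (a - m) * g u) 0 := by fun_prop
  refine (hcont.tendsto.mono_left nhdsWithin_le_nhds).congr' ?_
  filter_upwards [self_mem_nhdsWithin] with u (hu : u ≠ 0)
  rw [pow_sub₀ u hu hma]
  ring

theorem tendsto_orderCDF_div_pow {n k m : ℕ} (hm : m ≤ n - k + 1) :
    Tendsto (fun u => orderCDF n k u / u ^ m) (𝓝[≠] 0)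
      (𝓝 (0 ^ (n - k + 1 - m) * orderCDFQuot n k 0)) := by
  simp only [orderCDF_eq_pow_mul_orderCDFQuot]
  exact tendsto_pow_mul_div_pow_nhdsNE_zero (continuous_orderCDFQuot n k).continuousAt hm

theorem orderCDFQuot_succ_zero_of_add_eq {n k m : ℕ} (hm : m ≠ 0) (h : k + m = n) :
    orderCDFQuot n (k + 1) 0 =
      (n.factorial : ℝ) / ((m : ℝ) * (m - 1).factorial * k.factorial) := by
  rw [orderCDFQuot_zero k.add_one_ne_zero, orderCDFCoeff_zero (by omega),
    show n - (k + 1) + 1 = m by omega, show n - (k + 1) = m - 1 by omega, Nat.add_sub_cancel]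

theorem ORS_diversity_order_general (N Nr : ℕ) (hN : 2 ≤ N) (hNr : N ≤ Nr)
    (p : ℕ → ℝ) :
    Filter.Tendsto
      (fun u : ℝ =>
        (∑ k ∈ Finset.Icc N ((N - 1) * Nr + 1), p k * orderCDF (N * Nr) k u) / u ^ Nr)
      (nhdsWithin 0 (Set.Ioi 0))
      (nhds (p ((N - 1) * Nr + 1) * ((N * Nr).factorial : ℝ)
        / ((Nr : ℝ) * ((Nr - 1).factorial : ℝ) * (((N - 1) * Nr).factorial : ℝ)))) := by
  set K := (N - 1) * Nr + 1
  have hn : N * Nr = (N - 1) * Nr + Nr := by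
    rw [← Nat.succ_mul, Nat.succ_eq_add_one, Nat.sub_add_cancel (by omega)]
  have hNK : N ≤ K := by
    have := Nat.le_mul_of_pos_right (N - 1) (by omega : 0 < Nr)
    omega
  have hdeg : ∀ k ∈ Icc N K, Nr ≤ N * Nr - k + 1 := fun k hk => by
    rw [mem_Icc] at hk; omega
  have hlim := tendsto_finsetSum (Icc N K) fun k hk =>
    (tendsto_orderCDF_div_pow (hdeg k hk)).const_mul (p k)
  have hval : ∑ k ∈ Icc N K, p k * (0 ^ (N * Nr - k + 1 - Nr) * orderCDFQuot (N * Nr) k 0) =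
      p K * orderCDFQuot (N * Nr) K 0 := by
    rw [sum_eq_single_of_mem K (mem_Icc.mpr ⟨hNK, le_rfl⟩)]
    · rw [show N * Nr - K + 1 - Nr = 0 by omega, pow_zero, one_mul]
    · intro k hk hkK
      rw [mem_Icc] at hk
      rw [zero_pow (by omega), zero_mul, mul_zero]
  rw [hval, orderCDFQuot_succ_zero_of_add_eq (by omega) hn.symm, ← mul_div_assoc] at hlim
  simpa only [sum_div, mul_div_assoc] using hlim.mono_left (nhdsGT_le_nhdsNE 0)

/-- Diversity order of ORS: for `2 ≤ N ≤ Nr`, `n = N·Nr`, and nonnegative reals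
`p_N, …, p_{(N−1)Nr+1}` summing to `1`,
`lim_{u→0⁺} (∑ₖ p_k · G_{n,k}(u)) / u^{Nr}
   = p_{(N−1)Nr+1} · (N·Nr)! / (Nr · (Nr−1)! · ((N−1)·Nr)!)`. -/
theorem ORS_diversity_order (N Nr : ℕ) (hN : 2 ≤ N) (hNr : N ≤ Nr)
    (p : ℕ → ℝ) (hp0 : ∀ k ∈ Finset.Icc N ((N - 1) * Nr + 1), 0 ≤ p k)
    (hp1 : ∑ k ∈ Finset.Icc N ((N - 1) * Nr + 1), p k = 1) :
    Filter.Tendsto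
      (fun u : ℝ =>
        (∑ k ∈ Finset.Icc N ((N - 1) * Nr + 1), p k * orderCDF (N * Nr) k u) / u ^ Nr)
      (nhdsWithin 0 (Set.Ioi 0))
      (nhds (p ((N - 1) * Nr + 1) * ((N * Nr).factorial : ℝ)
        / ((Nr : ℝ) * ((Nr - 1).factorial : ℝ) * (((N - 1) * Nr).factorial : ℝ)))) :=
  ORS_diversity_order_general N Nr hN hNr p
end

section
/- Let N and N_r be integers with 2 ≤ N ≤ N_r, set n = N·N_r, and for N ≤ k ≤ (N−1)·N_r + 1 define G_{n,k}(u) = ∑_{i=0}^{k−1} [n!·C(k−1,i)·(−1)^i / ((n−k+i+1)·(n−k)!·(k−1)!)] · u^{n−k+i+1}. Let p_N, …, p_{(N−1)N_r+1} be nonnegative reals summing to 1 with p_{(N−1)N_r+1} = (N_r − 1)! / ∏_{l=1}^{N_r−1} (N·N_r − l). Then lim_{u→0⁺} [∑_{k=N}^{(N−1)N_r+1} p_k · G_{n,k}(u)] / u^{N_r} = N. -/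
open Filter Topology Finset

theorem tendsto_sum_mul_pow_div_pow {𝕜 ι : Type*} [Field 𝕜] [TopologicalSpace 𝕜]
    [IsTopologicalSemiring 𝕜] (s : Finset ι) (c : ι → 𝕜) (e : ι → ℕ) {r : ℕ}
    (hr : ∀ i ∈ s, r ≤ e i) :
    Tendsto (fun u : 𝕜 => (∑ i ∈ s, c i * u ^ e i) / u ^ r) (𝓝[≠] 0)
      (𝓝 (∑ i ∈ s, c i * 0 ^ (e i - r))) := by
  have hcont : Continuous fun u : 𝕜 => ∑ i ∈ s, c i * u ^ (e i - r) := by fun_prop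
  refine ((hcont.tendsto 0).mono_left nhdsWithin_le_nhds).congr' ?_
  filter_upwards [self_mem_nhdsWithin] with u (hu : u ≠ 0)
  rw [sum_div]
  refine sum_congr rfl fun i hi => ?_
  rw [mul_div_assoc, pow_sub₀ u hu (hr i hi), div_eq_mul_inv]

theorem orderCDF_eq_sum_coeff (n k : ℕ) (u : ℝ) :
    orderCDF n k u = ∑ i ∈ range k, orderCDFCoeff n k i * u ^ (n - k + i + 1) := rfl

theorem orderCDFCoeff_zero_s12 {n k : ℕ} (hk : 1 ≤ k) (hkn : k ≤ n) :
    orderCDFCoeff n k 0 = n.choose (k - 1) := by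
  have hcast : (n : ℝ) - k + (0 : ℕ) + 1 = (n - k + 1 : ℕ) := by
    push_cast [Nat.cast_sub hkn]; ring
  rw [orderCDFCoeff, Nat.cast_choose ℝ (show k - 1 ≤ n by omega), hcast,
    show n - (k - 1) = n - k + 1 by omega, Nat.factorial_succ, Nat.choose_zero_right]
  push_cast
  ring

theorem tendsto_orderCDF_div_pow_of_lt {n k r : ℕ} (h : r < n - k + 1) :
    Tendsto (fun u => orderCDF n k u / u ^ r) (𝓝[≠] 0) (𝓝 0) := by
  simp only [orderCDF_eq_sum_coeff]
  convert tendsto_sum_mul_pow_div_pow (range k) (orderCDFCoeff n k) (fun i => n - k + i + 1)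
    (r := r) (fun i _ => by omega)
  refine (sum_eq_zero fun i _ => ?_).symm
  rw [zero_pow (by omega), mul_zero]

theorem tendsto_orderCDF_div_pow_lowest {n k : ℕ} (hk : 1 ≤ k) (hkn : k ≤ n) :
    Tendsto (fun u => orderCDF n k u / u ^ (n - k + 1)) (𝓝[≠] 0) (𝓝 (n.choose (k - 1))) := by
  simp only [orderCDF_eq_sum_coeff]
  convert tendsto_sum_mul_pow_div_pow (range k) (orderCDFCoeff n k) (fun i => n - k + i + 1)
    (r := n - k + 1) (fun i _ => by omega)
  rw [← orderCDFCoeff_zero_s12 hk hkn, sum_eq_single_of_mem 0 (mem_range.mpr hk)]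
  · simp
  · intro i _ hi
    rw [zero_pow (by omega), mul_zero]

theorem prod_Icc_sub_eq_descFactorial (a j : ℕ) (h : j ≤ a) :
    ∏ l ∈ Icc 1 j, (((a + 1 : ℕ) : ℝ) - l) = a.descFactorial j := by
  induction j with
  | zero => simp
  | succ j ih =>
    rw [prod_Icc_succ_top (by omega), ih (by omega), Nat.descFactorial_succ,
      Nat.cast_mul, Nat.cast_sub (by omega)]
    push_cast; ring

theorem factorial_div_prod_mul_choose {n r : ℕ} (hr : 1 ≤ r) (hrn : r ≤ n) :
    ((r - 1).factorial : ℝ) / (∏ l ∈ Icc 1 (r - 1), ((n : ℝ) - l)) * n.choose r = n / r := by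
  obtain ⟨j, rfl⟩ : ∃ j, r = j + 1 := ⟨r - 1, by omega⟩
  obtain ⟨a, rfl⟩ : ∃ a, n = a + 1 := ⟨n - 1, by omega⟩
  have hchoose : ((j + 1 : ℕ) : ℝ) * j.factorial * (a + 1).choose (j + 1)
      = ((a + 1 : ℕ) : ℝ) * a.descFactorial j := by
    rw [← Nat.cast_mul, ← Nat.factorial_succ]
    exact_mod_cast (Nat.descFactorial_eq_factorial_mul_choose _ _).symm.trans
      (Nat.succ_descFactorial_succ a j)
  have hdesc : (a.descFactorial j : ℝ) ≠ 0 := by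
    exact_mod_cast (Nat.descFactorial_pos.mpr (by omega)).ne'
  rw [add_tsub_cancel_right, prod_Icc_sub_eq_descFactorial a j (by omega)]
  field_simp
  linear_combination hchoose

theorem ORS_array_gain_general (N Nr : ℕ) (hN : 2 ≤ N) (hNr : N ≤ Nr)
    (p : ℕ → ℝ)
    (hptop : p ((N - 1) * Nr + 1)
      = ((Nr - 1).factorial : ℝ)
        / ∏ l ∈ Finset.Icc 1 (Nr - 1), ((N : ℝ) * (Nr : ℝ) - (l : ℝ))) :
    Filter.Tendsto
      (fun u : ℝ =>
        (∑ k ∈ Finset.Icc N ((N - 1) * Nr + 1), p k * orderCDF (N * Nr) k u) / u ^ Nr)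
      (nhdsWithin 0 (Set.Ioi 0)) (nhds (N : ℝ)) := by
  have hmn : (N - 1) * Nr + Nr = N * Nr := by
    rw [← Nat.succ_mul, Nat.succ_eq_add_one, Nat.sub_add_cancel (by omega)]
  have hNm : N ≤ (N - 1) * Nr + 1 := by
    have := Nat.le_mul_of_pos_right (N - 1) (show 0 < Nr by omega)
    omega
  have hvalue : p ((N - 1) * Nr + 1) * (N * Nr).choose ((N - 1) * Nr) = N := by
    rw [hptop, ← hmn, Nat.choose_symm_add, hmn, ← Nat.cast_mul,
      factorial_div_prod_mul_choose (by omega) (by omega), Nat.cast_mul,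
      mul_div_cancel_right₀ _ (Nat.cast_ne_zero.mpr (by omega))]
  set m := (N - 1) * Nr
  generalize N * Nr = n at *
  have hlim := (tendsto_finsetSum (Icc N m) fun k hk =>
      (tendsto_orderCDF_div_pow_of_lt (n := n) (k := k) (r := Nr)
        (by have := (mem_Icc.mp hk).2; omega)).const_mul (p k)).add
    ((tendsto_orderCDF_div_pow_lowest (n := n) (k := m + 1) (by omega) (by omega)).const_mul
      (p (m + 1)))
  rw [show n - (m + 1) + 1 = Nr by omega, add_tsub_cancel_right, hvalue] at hlim
  simp only [mul_zero, sum_const_zero, zero_add] at hlim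
  refine (hlim.mono_left (nhdsWithin_mono _ fun u (hu : 0 < u) => hu.ne')).congr fun u => ?_
  rw [sum_Icc_succ_top hNm, add_div, sum_div]
  simp only [mul_div_assoc]

/-- Array gain of ORS: for `2 ≤ N ≤ Nr`, `n = N·Nr`, nonnegative reals
`p_N, …, p_{(N−1)Nr+1}` summing to `1` with
`p_{(N−1)Nr+1} = (Nr−1)! / ∏_{l=1}^{Nr−1} (N·Nr − l)`,
`lim_{u→0⁺} (∑ₖ p_k · G_{n,k}(u)) / u^{Nr} = N`. -/
theorem ORS_array_gain (N Nr : ℕ) (hN : 2 ≤ N) (hNr : N ≤ Nr)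
    (p : ℕ → ℝ) (hp0 : ∀ k ∈ Finset.Icc N ((N - 1) * Nr + 1), 0 ≤ p k)
    (hp1 : ∑ k ∈ Finset.Icc N ((N - 1) * Nr + 1), p k = 1)
    (hptop : p ((N - 1) * Nr + 1)
      = ((Nr - 1).factorial : ℝ)
        / ∏ l ∈ Finset.Icc 1 (Nr - 1), ((N : ℝ) * (Nr : ℝ) - (l : ℝ))) :
    Filter.Tendsto
      (fun u : ℝ =>
        (∑ k ∈ Finset.Icc N ((N - 1) * Nr + 1), p k * orderCDF (N * Nr) k u) / u ^ Nr)
      (nhdsWithin 0 (Set.Ioi 0)) (nhds (N : ℝ)) :=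
  ORS_array_gain_general N Nr hN hNr p hptop
end

section
/- For N_r = 2 (n = 4), define G_{4,k}(u) = ∑_{i=0}^{k−1} [4!·C(k−1,i)·(−1)^i / ((4−k+i+1)·(4−k)!·(k−1)!)] · u^{4−k+i+1} and Q_ORS(u) = (1/3)·G_{4,2}(u) + (2/3)·G_{4,3}(u). Then lim_{u→0⁺} Q_ORS(u)/u² = 4. -/
open Filter Topology

lemma orderCDF_four_two (u : ℝ) : orderCDF 4 2 u = 4 * u ^ 3 - 3 * u ^ 4 := by
  simp only [orderCDF, Finset.sum_range_succ, Finset.sum_range_zero]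
  norm_num [Nat.factorial]
  ring

lemma orderCDF_four_three (u : ℝ) : orderCDF 4 3 u = 6 * u ^ 2 - 8 * u ^ 3 + 3 * u ^ 4 := by
  simp only [orderCDF, Finset.sum_range_succ, Finset.sum_range_zero]
  norm_num [Nat.factorial, Nat.choose]
  ring

lemma orderCDF_four_mix_eq_sq_mul_sq (u : ℝ) :
    (1 / 3 : ℝ) * orderCDF 4 2 u + (2 / 3 : ℝ) * orderCDF 4 3 u = u ^ 2 * (2 - u) ^ 2 := by
  rw [orderCDF_four_two, orderCDF_four_three]
  ring

lemma tendsto_sq_mul_div_sq_nhdsGT_zero {f : ℝ → ℝ} {a : ℝ} (hf : Tendsto f (𝓝[>] 0) (𝓝 a)) :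
    Tendsto (fun u : ℝ => u ^ 2 * f u / u ^ 2) (𝓝[>] 0) (𝓝 a) := by
  refine hf.congr' (eventually_mem_nhdsWithin.mono fun u (hu : 0 < u) => ?_)
  field_simp

/-- For `Nr = 2` (so `n = 4`), the two-user ORS outage bound
`Q_ORS(u) = (1/3)·G_{4,2}(u) + (2/3)·G_{4,3}(u)` satisfies
`lim_{u→0⁺} Q_ORS(u)/u² = 4`. -/
theorem ORS_outage_bound_limit_two_relays :
    Filter.Tendsto
      (fun u : ℝ =>
        ((1 / 3 : ℝ) * orderCDF 4 2 u + (2 / 3 : ℝ) * orderCDF 4 3 u) / u ^ 2)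
      (nhdsWithin 0 (Set.Ioi 0)) (nhds 4) := by
  simp_rw [orderCDF_four_mix_eq_sq_mul_sq]
  apply tendsto_sq_mul_div_sq_nhdsGT_zero
  have hcont : Tendsto (fun u : ℝ => (2 - u) ^ 2) (𝓝 0) (𝓝 ((2 - 0) ^ 2)) :=
    ((continuous_const.sub continuous_id).pow 2).tendsto 0
  norm_num at hcont
  exact hcont.mono_left nhdsWithin_le_nhds
end
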